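/- arXiv:0906.1857 — 7 statements merged into one kernel-verified Lean document; each statement's English description precedes it below -/
import Mathlib

section
/- Let Q be a cycle in a graph and let (Z1, Z2) be a nontrivial (Q,4)-scheme. Then |Q| ≥ 2(|Z1| + |Z2|). -/
/-- Arc condition within one set of a `(Q,r)`-scheme: the cycle `Q` is modeled as `ZMod n`
(vertices `0,…,n-1` in the chosen orientation), and the arc from `x` to `y` in the chosen
direction has length `(y - x).val`.  Within one `Zᵢ`, arcs between distinct vertices have
length at least `2`. -/
def ArcWithin (n : ℕ) (Z : Finset (ZMod n)) : Prop :=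
  ∀ x ∈ Z, ∀ y ∈ Z, x ≠ y → 2 ≤ (y - x).val

/-- Arc condition between two different sets of a `(Q,r)`-scheme: arcs between distinct
vertices of different sets have length at least `r` (applied in both orders, this gives
both directions). -/
def ArcBetween (n r : ℕ) (Z W : Finset (ZMod n)) : Prop :=
  ∀ x ∈ Z, ∀ y ∈ W, x ≠ y → r ≤ (y - x).val

lemma key_ne {n : ℕ} [NeZero n] {x y : ZMod n} {a b r : ℕ} (ha : a < r) (hb : b < r)
    (hh1 : r ≤ (y - x).val) (hh2 : r ≤ (x - y).val) :
    x + (a : ZMod n) ≠ y + (b : ZMod n) := by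
  intro h
  rcases le_total b a with hba | hab
  · have hyx : y - x = ((a - b : ℕ) : ZMod n) := by
      have : (a : ZMod n) = (b : ZMod n) + ((a - b : ℕ) : ZMod n) := by
        rw [← Nat.cast_add, Nat.add_sub_cancel' hba]
      rw [this] at h
      linear_combination -h
    rw [hyx, ZMod.val_natCast] at hh1
    have := Nat.mod_le (a - b) n
    omega
  · have hxy : x - y = ((b - a : ℕ) : ZMod n) := by
      have : (b : ZMod n) = (a : ZMod n) + ((b - a : ℕ) : ZMod n) := by
        rw [← Nat.cast_add, Nat.add_sub_cancel' hab]
      rw [this] at h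
      linear_combination h
    rw [hxy, ZMod.val_natCast] at hh2
    have := Nat.mod_le (b - a) n
    omega

lemma disj_images {n : ℕ} [NeZero n] (A B : Finset (ZMod n)) (a b r : ℕ)
    (ha : a < r) (hb : b < r) (hrn : r ≤ n) (hab : a ≠ b)
    (h : ∀ x ∈ A, ∀ y ∈ B, x ≠ y → r ≤ (y - x).val ∧ r ≤ (x - y).val) :
    Disjoint (A.image (· + (a : ZMod n))) (B.image (· + (b : ZMod n))) := by
  rw [Finset.disjoint_left]
  rintro z hz hz'
  obtain ⟨x, hx, rfl⟩ := Finset.mem_image.mp hz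
  obtain ⟨y, hy, hxy⟩ := Finset.mem_image.mp hz'
  by_cases hxye : x = y
  · subst hxye
    have hba : (b : ZMod n) = (a : ZMod n) := by
      simpa using add_left_cancel hxy
    have := congrArg ZMod.val hba
    rw [ZMod.val_cast_of_lt (by omega), ZMod.val_cast_of_lt (by omega)] at this
    omega
  · obtain ⟨c1, c2⟩ := h x hx y hy hxye
    exact key_ne hb ha c2 c1 hxy

theorem stmt1 (n r : ℕ) (hn : 3 ≤ n) (hr : 2 ≤ r)
    (Z1 Z2 : Finset (ZMod n))
    (h1 : ArcWithin n Z1) (h2 : ArcWithin n Z2)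
    (h12 : ArcBetween n r Z1 Z2) (h21 : ArcBetween n r Z2 Z1)
    (hnontriv : ∃ z1 ∈ Z1, ∃ z2 ∈ Z2, z1 ≠ z2)
    (hr4 : r = 4)
    : 2 * (Z1.card + Z2.card) ≤ n := by
  subst hr4
  haveI : NeZero n := ⟨by omega⟩
  classical
  set W := Z1 ∪ Z2 with hW
  set K := Z1 ∩ Z2 with hK
  have hcard : Z1.card + Z2.card = W.card + K.card :=
    (Finset.card_union_add_card_inter Z1 Z2).symm
  have P2 : ∀ x ∈ W, ∀ y ∈ W, x ≠ y → 2 ≤ (y - x).val ∧ 2 ≤ (x - y).val := by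
    intro x hx y hy hne
    simp only [hW, Finset.mem_union] at hx hy
    constructor
    · rcases hx with h | h <;> rcases hy with h' | h'
      · exact h1 x h y h' hne
      · exact le_trans (by norm_num) (h12 x h y h' hne)
      · exact le_trans (by norm_num) (h21 x h y h' hne)
      · exact h2 x h y h' hne
    · rcases hy with h' | h' <;> rcases hx with h | h
      · exact h1 y h' x h hne.symm
      · exact le_trans (by norm_num) (h12 y h' x h hne.symm)
      · exact le_trans (by norm_num) (h21 y h' x h hne.symm)
      · exact h2 y h' x h hne.symm
  have P4 : ∀ x ∈ W, ∀ y ∈ K, x ≠ y → 4 ≤ (y - x).val ∧ 4 ≤ (x - y).val := by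
    intro x hx y hy hne
    simp only [hW, Finset.mem_union] at hx
    simp only [hK, Finset.mem_inter] at hy
    constructor
    · rcases hx with h | h
      · exact h12 x h y hy.2 hne
      · exact h21 x h y hy.1 hne
    · rcases hx with h | h
      · exact h21 y hy.2 x h hne.symm
      · exact h12 y hy.1 x h hne.symm
  have P4' : ∀ x ∈ K, ∀ y ∈ K, x ≠ y → 4 ≤ (y - x).val ∧ 4 ≤ (x - y).val := by
    intro x hx y hy hne
    exact P4 x (by simp only [hK, Finset.mem_inter] at hx; simp [hW, Finset.mem_union, hx.1]) y hy hne
  have hKW : K ⊆ W := by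
    intro x hx
    simp only [hK, Finset.mem_inter] at hx
    simp [hW, Finset.mem_union, hx.1]
  have hcn : Fintype.card (ZMod n) = n := ZMod.card n
  have himg : ∀ (A : Finset (ZMod n)) (c : ZMod n), (A.image (· + c)).card = A.card :=
    fun A c => Finset.card_image_of_injective _ (add_left_injective c)
  by_cases hKe : K = ∅
  · -- only W and W+1
    have hd : Disjoint (W.image (· + ((0:ℕ) : ZMod n))) (W.image (· + ((1:ℕ) : ZMod n))) :=
      disj_images W W 0 1 2 (by norm_num) (by norm_num) (by omega) (by norm_num) P2
    have := Finset.card_le_card (Finset.subset_univ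
      ((W.image (· + ((0:ℕ) : ZMod n))) ∪ (W.image (· + ((1:ℕ) : ZMod n)))))
    rw [Finset.card_union_of_disjoint hd, himg, himg, Finset.card_univ, hcn] at this
    rw [hcard, hKe, Finset.card_empty, add_zero]
    omega
  · -- K nonempty, derive 5 ≤ n
    obtain ⟨w, hwK⟩ := Finset.nonempty_iff_ne_empty.mpr hKe
    obtain ⟨z1, hz1, z2, hz2, hz⟩ := hnontriv
    have hz1W : z1 ∈ W := by simp [hW, Finset.mem_union, hz1]
    have hz2W : z2 ∈ W := by simp [hW, Finset.mem_union, hz2]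
    have hn5 : 5 ≤ n := by
      by_cases hzw : z1 = w
      · have := (P4 z2 hz2W w hwK (by rw [← hzw]; exact hz.symm)).1
        have hlt := ZMod.val_lt (w - z2)
        omega
      · have := (P4 z1 hz1W w hwK hzw).1
        have hlt := ZMod.val_lt (w - z1)
        omega
    have d01 : Disjoint (W.image (· + ((0:ℕ) : ZMod n))) (W.image (· + ((1:ℕ) : ZMod n))) :=
      disj_images W W 0 1 2 (by norm_num) (by norm_num) (by omega) (by norm_num) P2
    have d02 : Disjoint (W.image (· + ((0:ℕ) : ZMod n))) (K.image (· + ((2:ℕ) : ZMod n))) :=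
      disj_images W K 0 2 4 (by norm_num) (by norm_num) (by omega) (by norm_num) P4
    have d03 : Disjoint (W.image (· + ((0:ℕ) : ZMod n))) (K.image (· + ((3:ℕ) : ZMod n))) :=
      disj_images W K 0 3 4 (by norm_num) (by norm_num) (by omega) (by norm_num) P4
    have d12 : Disjoint (W.image (· + ((1:ℕ) : ZMod n))) (K.image (· + ((2:ℕ) : ZMod n))) :=
      disj_images W K 1 2 4 (by norm_num) (by norm_num) (by omega) (by norm_num) P4
    have d13 : Disjoint (W.image (· + ((1:ℕ) : ZMod n))) (K.image (· + ((3:ℕ) : ZMod n))) :=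
      disj_images W K 1 3 4 (by norm_num) (by norm_num) (by omega) (by norm_num) P4
    have d23 : Disjoint (K.image (· + ((2:ℕ) : ZMod n))) (K.image (· + ((3:ℕ) : ZMod n))) :=
      disj_images K K 2 3 4 (by norm_num) (by norm_num) (by omega) (by norm_num) P4'
    set S0 := W.image (· + ((0:ℕ) : ZMod n))
    set S1 := W.image (· + ((1:ℕ) : ZMod n))
    set S2 := K.image (· + ((2:ℕ) : ZMod n))
    set S3 := K.image (· + ((3:ℕ) : ZMod n))
    have hc : (S0 ∪ S1 ∪ S2 ∪ S3).card = W.card + W.card + K.card + K.card := by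
      rw [Finset.card_union_of_disjoint (by
            rw [Finset.disjoint_union_left]
            exact ⟨Finset.disjoint_union_left.mpr ⟨d03, d13⟩, d23⟩),
          Finset.card_union_of_disjoint (Finset.disjoint_union_left.mpr ⟨d02, d12⟩),
          Finset.card_union_of_disjoint d01, himg, himg, himg, himg]
    have := Finset.card_le_card (Finset.subset_univ (S0 ∪ S1 ∪ S2 ∪ S3))
    rw [hc, Finset.card_univ, hcn] at this
    omega
end

section
/- Let Q be a cycle in a graph, r ≥ 5, and let (Z1, Z2) be a nontrivial (Q,r)-scheme. Then |Q| ≥ 2(|Z1| + |Z2|) + r − 3. -/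
lemma core {n : ℕ} [NeZero n] (S : Finset (ZMod n)) (L : ZMod n → ℕ)
    (hLle : ∀ z ∈ S, L z ≤ n)
    (h : ∀ z ∈ S, ∀ u ∈ S, z ≠ u → L z ≤ (u - z).val) :
    ∑ z ∈ S, L z ≤ n := by
  classical
  have key : ∀ z ∈ S, ∀ u ∈ S, ∀ j < L z, ∀ k < L u,
      z + (j : ZMod n) = u + (k : ZMod n) → z = u ∧ j = k := by
    intro z hz u hu j hj k hk heq
    by_cases hzu : z = u
    · subst hzu
      have hjk : (j : ZMod n) = (k : ZMod n) := add_left_cancel heq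
      refine ⟨rfl, ?_⟩
      have hj' : j < n := lt_of_lt_of_le hj (hLle z hz)
      have hk' : k < n := lt_of_lt_of_le hk (hLle z hz)
      have := congrArg ZMod.val hjk
      rwa [ZMod.val_cast_of_lt hj', ZMod.val_cast_of_lt hk'] at this
    · exfalso
      rcases le_total k j with hkj | hjk
      · have e1 : u - z = ((j - k : ℕ) : ZMod n) := by
          push_cast [Nat.cast_sub hkj]
          linear_combination -heq
        have hv : (u - z).val = j - k := by
          rw [e1, ZMod.val_cast_of_lt (show j - k < n by
            have := hLle z hz; omega)]
        have hle := h z hz u hu hzu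
        rw [hv] at hle
        omega
      · have e1 : z - u = ((k - j : ℕ) : ZMod n) := by
          push_cast [Nat.cast_sub hjk]
          linear_combination heq
        have hv : (z - u).val = k - j := by
          rw [e1, ZMod.val_cast_of_lt (show k - j < n by
            have := hLle u hu; omega)]
        have hle := h u hu z hz (Ne.symm hzu)
        rw [hv] at hle
        omega
  have hdisj : ∀ z ∈ S, ∀ u ∈ S, z ≠ u →
      Disjoint ((Finset.range (L z)).image (fun j : ℕ => z + (j : ZMod n)))
               ((Finset.range (L u)).image (fun j : ℕ => u + (j : ZMod n))) := by
    intro z hz u hu hzu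
    rw [Finset.disjoint_left]
    intro a ha hb
    simp only [Finset.mem_image, Finset.mem_range] at ha hb
    obtain ⟨j, hj, hja⟩ := ha
    obtain ⟨k, hk, hka⟩ := hb
    exact hzu (key z hz u hu j hj k hk (hja.trans hka.symm)).1
  have hcard : (S.biUnion (fun z => (Finset.range (L z)).image (fun j : ℕ => z + (j : ZMod n)))).card ≤ n := by
    have := Finset.card_le_univ (S.biUnion (fun z => (Finset.range (L z)).image (fun j : ℕ => z + (j : ZMod n))))
    simpa [ZMod.card] using this
  rw [Finset.card_biUnion hdisj] at hcard
  calc ∑ z ∈ S, L z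
      = ∑ z ∈ S, ((Finset.range (L z)).image (fun j : ℕ => z + (j : ZMod n))).card := by
        apply Finset.sum_congr rfl
        intro z hz
        rw [Finset.card_image_of_injOn, Finset.card_range]
        intro j hj k hk heq
        simp only [Finset.mem_coe, Finset.mem_range] at hj hk
        exact (key z hz z hz j hj k hk heq).2
    _ ≤ n := hcard

lemma oppval {n : ℕ} [NeZero n] (a b : ZMod n) (hab : a ≠ b) :
    (a - b).val + (b - a).val = n := by
  have h1 : a - b ≠ 0 := sub_ne_zero.mpr hab
  have h2 : b - a = -(a - b) := by ring
  rw [h2, ZMod.neg_val, if_neg h1]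
  have h3 : 0 < (a - b).val := by
    rcases Nat.eq_zero_or_pos (a - b).val with h | h
    · exfalso; apply h1
      have := ZMod.natCast_rightInverse (n := n) (a - b)
      rw [← this, h]; simp
    · exact h
  have := ZMod.val_lt (a - b)
  omega

theorem stmt2 (n r : ℕ) (hn : 3 ≤ n) (hr : 2 ≤ r)
    (Z1 Z2 : Finset (ZMod n))
    (h1 : ArcWithin n Z1) (h2 : ArcWithin n Z2)
    (h12 : ArcBetween n r Z1 Z2) (h21 : ArcBetween n r Z2 Z1)
    (hnontriv : ∃ z1 ∈ Z1, ∃ z2 ∈ Z2, z1 ≠ z2)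
    (hr5 : 5 ≤ r)
    : 2 * ((Z1.card : ℤ) + Z2.card) + r - 3 ≤ (n : ℤ) := by
  classical
  haveI : NeZero n := ⟨by omega⟩
  set S := Z1 ∪ Z2 with hS
  set I := Z1 ∩ Z2 with hI
  set m := S.card with hm
  set i := I.card with hi
  have hIS : I ⊆ S := Finset.inter_subset_union
  have him : i ≤ m := Finset.card_le_card hIS
  have hcards : m + i = Z1.card + Z2.card := Finset.card_union_add_card_inter Z1 Z2
  -- basic gap facts
  have gap2 : ∀ z ∈ S, ∀ u ∈ S, z ≠ u → 2 ≤ (u - z).val := by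
    intro z hz u hu hzu
    rcases Finset.mem_union.mp hz with hz' | hz' <;> rcases Finset.mem_union.mp hu with hu' | hu'
    · exact h1 z hz' u hu' hzu
    · exact le_trans hr (h12 z hz' u hu' hzu)
    · exact le_trans hr (h21 z hz' u hu' hzu)
    · exact h2 z hz' u hu' hzu
  have gapI : ∀ z ∈ I, ∀ u ∈ S, z ≠ u → r ≤ (u - z).val := by
    intro z hz u hu hzu
    obtain ⟨hz1, hz2⟩ := Finset.mem_inter.mp hz
    rcases Finset.mem_union.mp hu with hu' | hu'
    · exact h21 z hz2 u hu' hzu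
    · exact h12 z hz1 u hu' hzu
  have gapI' : ∀ z ∈ I, ∀ u ∈ S, u ≠ z → r ≤ (z - u).val := by
    intro z hz u hu huz
    obtain ⟨hz1, hz2⟩ := Finset.mem_inter.mp hz
    rcases Finset.mem_union.mp hu with hu' | hu'
    · exact h12 u hu' z hz2 huz
    · exact h21 u hu' z hz1 huz
  -- minimal pair
  obtain ⟨z1, hz1, z2, hz2, hz12⟩ := hnontriv
  obtain ⟨p0, hp0, hmin⟩ := Finset.exists_min_image
    ((Z1 ×ˢ Z2).filter (fun p => p.1 ≠ p.2)) (fun p => (p.2 - p.1).val)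
    ⟨(z1, z2), by simp [Finset.mem_filter, Finset.mem_product, hz1, hz2, hz12]⟩
  rw [Finset.mem_filter, Finset.mem_product] at hp0
  obtain ⟨⟨hx0, hy0⟩, hxy⟩ := hp0
  set x0 := p0.1 with hx0def
  set y0 := p0.2 with hy0def
  set d := (y0 - x0).val with hd'
  have hd : r ≤ d := h12 x0 hx0 y0 hy0 hxy
  have hdn : d < n := ZMod.val_lt _
  have hrn : r < n := lt_of_le_of_lt hd hdn
  have hx0S : x0 ∈ S := Finset.mem_union.mpr (Or.inl hx0)
  have hdval : ((d : ℕ) : ZMod n) = y0 - x0 := ZMod.natCast_rightInverse _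
  -- d ≤ n - r
  have hdnr : d + r ≤ n := by
    have := oppval y0 x0 (Ne.symm hxy)
    have := h21 y0 hy0 x0 hx0 (Ne.symm hxy)
    omega
  -- key minimality claim
  have K : ∀ u ∈ S, u ≠ x0 → d ≤ (u - x0).val := by
    intro u hu hux
    by_contra hlt
    push_neg at hlt
    set v := (u - x0).val with hv'
    have hvval : ((v : ℕ) : ZMod n) = u - x0 := ZMod.natCast_rightInverse _
    rcases Finset.mem_union.mp hu with hu' | hu'
    · -- u ∈ Z1 : pair (u, y0) is smaller
      have huy : u ≠ y0 := by
        intro h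
        rw [h] at hv'
        omega
      have hcomp : y0 - u = ((d - v : ℕ) : ZMod n) := by
        push_cast [Nat.cast_sub (le_of_lt hlt)]
        rw [hdval, hvval]; ring
      have hval2 : (y0 - u).val = d - v := by
        rw [hcomp, ZMod.val_cast_of_lt (by omega)]
      have hge := hmin (u, y0) (by
        rw [Finset.mem_filter, Finset.mem_product]
        exact ⟨⟨hu', hy0⟩, huy⟩)
      simp only at hge
      rw [hval2] at hge
      have hv1 : 0 < v := by
        rcases Nat.eq_zero_or_pos v with h | h
        · exfalso; apply hux
          have : u - x0 = 0 := by rw [← hvval, h]; simp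
          exact sub_eq_zero.mp this
        · exact h
      omega
    · -- u ∈ Z2 : pair (x0, u) is smaller
      have hge := hmin (x0, u) (by
        rw [Finset.mem_filter, Finset.mem_product]
        exact ⟨⟨hx0, hu'⟩, Ne.symm hux⟩)
      simp only at hge
      omega
  -- goal reduction to ℕ
  suffices hfin : 2 * (Z1.card + Z2.card) + r ≤ n + 3 by omega
  by_cases hx0I : x0 ∈ Z2
  · -- x0 ∈ I
    have hx0I' : x0 ∈ I := Finset.mem_inter.mpr ⟨hx0, hx0I⟩
    have hi1 : 1 ≤ i := Finset.card_pos.mpr ⟨x0, hx0I'⟩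
    by_cases hi2 : 2 ≤ i
    · -- Case B
      have hsum := core S (fun z => if z ∈ I then r else 2)
        (by intro z hz; beta_reduce; split_ifs <;> omega)
        (by
          intro z hz u hu hzu
          beta_reduce
          split_ifs with hzI
          · exact gapI z hzI u hu hzu
          · exact gap2 z hz u hu hzu)
      have e2 : ∑ z ∈ I, (if z ∈ I then r else 2) = i * r := by
        rw [Finset.sum_congr rfl (fun z hz => if_pos hz), Finset.sum_const, smul_eq_mul]
      have e3 : ∑ z ∈ S \ I, (if z ∈ I then r else 2) = 2 * (m - i) := by
        rw [Finset.sum_congr rfl (fun z hz => if_neg (Finset.mem_sdiff.mp hz).2),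
          Finset.sum_const, smul_eq_mul, Finset.card_sdiff_of_subset hIS, mul_comm]
      rw [← Finset.sum_sdiff hIS, e2, e3] at hsum
      obtain ⟨a, ha⟩ : ∃ a, i = a + 2 := ⟨i - 2, by omega⟩
      obtain ⟨b, hb⟩ : ∃ b, r = b + 5 := ⟨r - 5, by omega⟩
      have hexp : i * r = a * b + 5 * a + 2 * b + 10 := by rw [ha, hb]; ring
      rw [hexp] at hsum
      revert hsum
      generalize a * b = c
      intro hsum
      omega
    · -- Case C : i = 1, I = {x0}
      have hieq : i = 1 := by omega
      have hIsing : I = {x0} := by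
        obtain ⟨a, ha⟩ := Finset.card_eq_one.mp hieq
        rw [ha] at hx0I' ⊢
        rw [Finset.mem_singleton.mp hx0I']
      have hnotI : ∀ z, z ≠ x0 → z ∉ I := by
        intro z hz hmem
        exact hz (by rwa [hIsing, Finset.mem_singleton] at hmem)
      set x0' := x0 - ((r - 2 : ℕ) : ZMod n) with hx0'def
      have hr2n : r - 2 < n := by omega
      have hdiff : x0 - x0' = ((r - 2 : ℕ) : ZMod n) := by rw [hx0'def]; ring
      have hdiffval : (x0 - x0').val = r - 2 := by
        rw [hdiff, ZMod.val_cast_of_lt hr2n]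
      have hx0x : x0' ≠ x0 := by
        intro h
        rw [h] at hdiffval
        simp at hdiffval
        omega
      have hx0'S : x0' ∉ S := by
        intro hmem
        have := gapI' x0 hx0I' x0' hmem hx0x
        omega
      -- value computations
      have hforward : ∀ u ∈ S, u ≠ x0 → (u - x0').val = (u - x0).val + (r - 2) := by
        intro u hu hux
        set v := (u - x0).val with hv'
        have hvval : ((v : ℕ) : ZMod n) = u - x0 := ZMod.natCast_rightInverse _
        have hvb : v + r ≤ n := by
          have := oppval x0 u (Ne.symm hux)
          have := gapI' x0 hx0I' u hu hux
          omega
        have hcomp : u - x0' = ((v + (r - 2) : ℕ) : ZMod n) := by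
          push_cast
          rw [hvval, hx0'def]; ring
        rw [hcomp, ZMod.val_cast_of_lt (by omega)]
      have hback : ∀ u ∈ S, u ≠ x0 → (x0' - u).val = (x0 - u).val - (r - 2) := by
        intro u hu hux
        set w := (x0 - u).val with hw'
        have hwval : ((w : ℕ) : ZMod n) = x0 - u := ZMod.natCast_rightInverse _
        have hwr : r ≤ w := gapI' x0 hx0I' u hu hux
        have hwn : w < n := ZMod.val_lt _
        have hcomp : x0' - u = ((w - (r - 2) : ℕ) : ZMod n) := by
          push_cast [Nat.cast_sub (by omega : r - 2 ≤ w)]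
          rw [hwval, hx0'def]; ring
        rw [hcomp, ZMod.val_cast_of_lt (by omega)]
      set S' := insert x0' (S.erase x0) with hS'
      have hx0'E : x0' ∉ S.erase x0 := fun h => hx0'S (Finset.mem_of_mem_erase h)
      have hsum := core S' (fun z => if z = x0' then d + (r - 2) else 2)
        (by
          intro z hz
          beta_reduce
          split_ifs <;> omega)
        (by
          intro z hz u hu hzu
          beta_reduce
          rcases Finset.mem_insert.mp hz with hz' | hz'
          · rw [if_pos hz']
            rcases Finset.mem_insert.mp hu with hu' | hu'
            · exact absurd (hz'.trans hu'.symm) hzu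
            · have huS : u ∈ S := Finset.mem_of_mem_erase hu'
              have hux : u ≠ x0 := Finset.ne_of_mem_erase hu'
              rw [hz', hforward u huS hux]
              have := K u huS hux
              omega
          · have hzx0' : z ≠ x0' := fun h => hx0'E (by rw [← h]; exact hz')
            rw [if_neg hzx0']
            have hzS : z ∈ S := Finset.mem_of_mem_erase hz'
            have hzx : z ≠ x0 := Finset.ne_of_mem_erase hz'
            rcases Finset.mem_insert.mp hu with hu' | hu'
            · rw [hu', hback z hzS hzx]
              have := gapI' x0 hx0I' z hzS hzx
              omega
            · exact gap2 z hzS u (Finset.mem_of_mem_erase hu') hzu)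
      rw [hS', Finset.sum_insert hx0'E, if_pos rfl] at hsum
      have e4 : ∑ z ∈ S.erase x0, (if z = x0' then d + (r - 2) else 2) = 2 * (m - 1) := by
        rw [Finset.sum_congr rfl (fun z hz => if_neg (fun h => hx0'E (by rw [← h]; exact hz))),
          Finset.sum_const, smul_eq_mul, Finset.card_erase_of_mem hx0S, mul_comm]
      rw [e4] at hsum
      omega
  · -- Case A : x0 ∉ I
    have hx0nI : x0 ∉ I := fun h => hx0I (Finset.mem_inter.mp h).2
    have hsum := core S (fun z => if z = x0 then d else if z ∈ I then r else 2)
      (by intro z hz; beta_reduce; split_ifs <;> omega)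
      (by
        intro z hz u hu hzu
        beta_reduce
        split_ifs with hzx hzI
        · subst hzx; exact K u hu (Ne.symm hzu)
        · exact gapI z hzI u hu hzu
        · exact gap2 z hz u hu hzu)
    have e2 : ∑ z ∈ I, (if z = x0 then d else if z ∈ I then r else 2) = i * r := by
      rw [Finset.sum_congr rfl (fun z hz => by
        rw [if_neg (fun h => hx0nI (by rw [← h]; exact hz)), if_pos hz]), Finset.sum_const, smul_eq_mul]
    have hx0SI : x0 ∈ S \ I := Finset.mem_sdiff.mpr ⟨hx0S, hx0nI⟩
    have e3 : ∑ z ∈ S \ I, (if z = x0 then d else if z ∈ I then r else 2)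
        = d + 2 * ((m - i) - 1) := by
      rw [← Finset.add_sum_erase _ _ hx0SI, if_pos rfl]
      congr 1
      rw [Finset.sum_congr rfl (fun z hz => by
        rw [if_neg (Finset.ne_of_mem_erase hz),
          if_neg (Finset.mem_sdiff.mp (Finset.mem_of_mem_erase hz)).2]),
        Finset.sum_const, smul_eq_mul, Finset.card_erase_of_mem hx0SI,
        Finset.card_sdiff_of_subset hIS, mul_comm]
    rw [← Finset.sum_sdiff hIS, e2, e3] at hsum
    have him1 : i + 1 ≤ m := by
      have := Finset.card_lt_card (Finset.ssubset_iff_of_subset hIS |>.mpr ⟨x0, hx0S, hx0nI⟩)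
      omega
    have h4 : i * 4 ≤ i * r := Nat.mul_le_mul_left i (by omega)
    revert hsum h4
    generalize i * r = t
    intro hsum h4
    omega
end

section
/- Let Q be a cycle in a graph and let (Z1, Z2) be a nontrivial (Q,r)-scheme with |Z2| = 1. Then |Q| ≥ 2|Z1| + 2r − 4. -/
/-!
Fix `z ∈ Z2` and measure every `x ∈ Z1 \ {z}` by the length `(x - z).val` of the arc from `z`
to `x`. These lengths are distinct, lie in `[r, n - r]` because both arcs between `x` and `z`
have length at least `r`, and differ pairwise by at least `2` because the arc between two
vertices of `Z1` is the difference of their lengths. At most `(n - 2r)/2 + 1` such numbers fit,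
so `|Z1| ≤ (n - 2r)/2 + 2`.
-/

open Finset

theorem Nat.two_mul_card_le_of_two_separated (S : Finset ℕ) {a b : ℕ}
    (hS : ∀ v ∈ S, a ≤ v ∧ v ≤ b) (hsep : ∀ u ∈ S, ∀ v ∈ S, u < v → u + 2 ≤ v) :
    2 * #S ≤ b + 2 - a := by
  have hmaps : Set.MapsTo (fun v => (v - a) / 2) S (range ((b - a) / 2 + 1)) := by
    intro v hv
    have := hS v hv
    simp only [coe_range, Set.mem_Iio]
    omega
  have hmono : StrictMonoOn (fun v => (v - a) / 2) S := by
    intro u hu v hv hlt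
    have := hS u hu
    have := hsep u hu v hv hlt
    simp only
    omega
  have := card_le_card_of_injOn _ hmaps hmono.injOn
  rw [card_range] at this
  obtain rfl | ⟨v, hv⟩ := S.eq_empty_or_nonempty
  · simp
  · have := hS v hv
    omega

namespace ZMod

variable {n : ℕ} [NeZero n]

theorem val_sub_add_val_sub_of_ne {x y : ZMod n} (h : x ≠ y) :
    (x - y).val + (y - x).val = n := by
  have hxy : x - y ≠ 0 := sub_ne_zero.mpr h
  rw [← neg_sub x y, neg_val, if_neg hxy]
  have := (x - y).val_lt
  omega

theorem val_sub_eq_val_sub_sub_val_sub {x y : ZMod n} (z : ZMod n)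
    (h : (x - z).val ≤ (y - z).val) : (y - x).val = (y - z).val - (x - z).val := by
  rw [← val_sub h, sub_sub_sub_cancel_right]

end ZMod

theorem ArcWithin.two_mul_card_add_two_mul_le {n r : ℕ} [NeZero n] {Z : Finset (ZMod n)}
    (hZ : ArcWithin n Z) {z : ZMod n}
    (hfar : ∀ x ∈ Z, x ≠ z → r ≤ (x - z).val ∧ r ≤ (z - x).val) (hne : (Z.erase z).Nonempty) :
    2 * #Z + 2 * r ≤ n + 4 := by
  set S := (Z.erase z).image fun x => (x - z).val
  have hbound : ∀ v ∈ S, r ≤ v ∧ v ≤ n - r := by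
    simp only [S, mem_image, mem_erase]
    rintro _ ⟨x, ⟨hxz, hx⟩, rfl⟩
    have := ZMod.val_sub_add_val_sub_of_ne hxz
    have := hfar x hx hxz
    omega
  have hsep : ∀ u ∈ S, ∀ v ∈ S, u < v → u + 2 ≤ v := by
    simp only [S, mem_image, mem_erase]
    rintro _ ⟨x, ⟨-, hx⟩, rfl⟩ _ ⟨y, ⟨-, hy⟩, rfl⟩ hlt
    have hxy : x ≠ y := by
      rintro rfl
      exact hlt.false
    have := hZ x hx y hy hxy
    rw [ZMod.val_sub_eq_val_sub_sub_val_sub z hlt.le] at this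
    omega
  have hcard : #S = #(Z.erase z) :=
    card_image_of_injective _ ((ZMod.val_injective n).comp sub_left_injective)
  have := pred_card_le_card_erase (s := Z) (a := z)
  obtain ⟨v, hv⟩ := hne.image fun x => (x - z).val
  have := hbound v hv
  have := Nat.two_mul_card_le_of_two_separated S hbound hsep
  omega

theorem stmt3_general (n r : ℕ) (hn : 3 ≤ n)
    (Z1 Z2 : Finset (ZMod n))
    (h1 : ArcWithin n Z1)
    (h12 : ArcBetween n r Z1 Z2) (h21 : ArcBetween n r Z2 Z1)
    (hnontriv : ∃ z1 ∈ Z1, ∃ z2 ∈ Z2, z1 ≠ z2)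
    : 2 * (Z1.card : ℤ) + 2 * r - 4 ≤ (n : ℤ) := by
  have : NeZero n := ⟨by omega⟩
  obtain ⟨z1, hz1, z2, hz2, hne⟩ := hnontriv
  have hfar : ∀ x ∈ Z1, x ≠ z2 → r ≤ (x - z2).val ∧ r ≤ (z2 - x).val := fun x hx hxz =>
    ⟨h21 z2 hz2 x hx hxz.symm, h12 x hx z2 hz2 hxz⟩
  have := h1.two_mul_card_add_two_mul_le hfar ⟨z1, mem_erase.mpr ⟨hne, hz1⟩⟩
  omega

theorem stmt3 (n r : ℕ) (hn : 3 ≤ n) (hr : 2 ≤ r)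
    (Z1 Z2 : Finset (ZMod n))
    (h1 : ArcWithin n Z1) (h2 : ArcWithin n Z2)
    (h12 : ArcBetween n r Z1 Z2) (h21 : ArcBetween n r Z2 Z1)
    (hnontriv : ∃ z1 ∈ Z1, ∃ z2 ∈ Z2, z1 ≠ z2)
    (hZ2 : Z2.card = 1)
    : 2 * (Z1.card : ℤ) + 2 * r - 4 ≤ (n : ℤ) :=
  stmt3_general n r hn Z1 Z2 h1 h12 h21 hnontriv
end

section
/- Let Q be a cycle in a graph, r ≥ 4, and let (Z1, Z2) be a nontrivial (Q,r)-scheme with |Z1| + |Z2| ≥ 4. Then |Q| ≥ 2(|Z1| + |Z2|) + 2r − 8. -/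
/-!
Let `P = Z1 ∪ Z2` and, for `x ∈ P`, let the gap of `x` be the length of the arc from `x` to the
next point of `P`. The arcs `[x, x + gap x)` are pairwise disjoint, so the gaps sum to at most
`|Q|`. Every gap is at least `2`, and it is at least `r` whenever `x` and its successor lie in
different sets `Zᵢ` (a point of `Z1 ∩ Z2` counts as lying in both). Such long gaps start at
every point of `Z1 ∩ Z2`, and by nontriviality there are at least two of them. With
`|P| = |Z1| + |Z2| - |Z1 ∩ Z2|` this gives
`|Q| ≥ 2 |P| + max 2 |Z1 ∩ Z2| * (r - 2) ≥ 2 (|Z1| + |Z2|) + 2 r - 8` as soon as `r ≥ 4`.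
-/

open Finset

namespace ZMod

variable {n : ℕ} {P Z W : Finset (ZMod n)} {x y : ZMod n}

/-- `sInf ∅ = 0`, so the gap is `0` when `x` is the only point of `P`. -/
noncomputable def cyclicGap (P : Finset (ZMod n)) (x : ZMod n) : ℕ :=
  sInf ((fun y => (y - x).val) '' ↑(P.erase x))

noncomputable def cyclicSucc (P : Finset (ZMod n)) (x : ZMod n) : ZMod n :=
  x + (cyclicGap P x : ZMod n)

theorem cyclicGap_le (hy : y ∈ P) (hyx : y ≠ x) : cyclicGap P x ≤ (y - x).val :=
  Nat.sInf_le ⟨y, mem_coe.2 (mem_erase.2 ⟨hyx, hy⟩), rfl⟩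

theorem exists_mem_erase_val_sub_eq_cyclicGap (hP : 1 < #P) (x : ZMod n) :
    ∃ y ∈ P.erase x, (y - x).val = cyclicGap P x := by
  have hne : (P.erase x).Nonempty := by
    rw [← card_pos, card_erase_eq_ite]
    split_ifs <;> omega
  obtain ⟨y, hy⟩ := hne
  exact Nat.sInf_mem (s := (fun y => (y - x).val) '' ↑(P.erase x)) ⟨_, y, hy, rfl⟩

theorem cyclicGap_pos (hP : 1 < #P) (x : ZMod n) : 0 < cyclicGap P x := by
  obtain ⟨y, hy, hyx⟩ := exists_mem_erase_val_sub_eq_cyclicGap hP x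
  rw [← hyx, Nat.pos_iff_ne_zero, Ne, val_eq_zero, sub_eq_zero]
  exact ne_of_mem_erase hy

variable [NeZero n]

theorem cyclicGap_lt (hP : 1 < #P) (x : ZMod n) : cyclicGap P x < n := by
  obtain ⟨y, -, hyx⟩ := exists_mem_erase_val_sub_eq_cyclicGap hP x
  exact hyx ▸ val_lt _

theorem cyclicSucc_mem_erase (hP : 1 < #P) (x : ZMod n) : cyclicSucc P x ∈ P.erase x := by
  obtain ⟨y, hy, hyx⟩ := exists_mem_erase_val_sub_eq_cyclicGap hP x
  rwa [cyclicSucc, ← hyx, natCast_zmod_val, add_sub_cancel]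

theorem val_cyclicSucc_sub (hP : 1 < #P) (x : ZMod n) :
    (cyclicSucc P x - x).val = cyclicGap P x := by
  rw [cyclicSucc, add_sub_cancel_left, val_natCast_of_lt (cyclicGap_lt hP x)]

theorem le_cyclicGap_of_arcBetween {r : ℕ} (hP : 1 < #P) (hZW : ArcBetween n r Z W)
    (hx : x ∈ Z) (hsx : cyclicSucc P x ∈ W) : r ≤ cyclicGap P x := by
  rw [← val_cyclicSucc_sub hP]
  exact hZW x hx _ hsx (ne_of_mem_erase (cyclicSucc_mem_erase hP x)).symm

theorem exists_mem_cyclicSucc_notMem (hZP : Z ⊆ P) (hx : x ∈ Z) (hy : y ∈ P) (hyZ : y ∉ Z) :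
    ∃ a ∈ Z, cyclicSucc P a ∉ Z := by
  -- the last point `a` of `Z` before `y`: its successor lies in between, strictly closer to `y`
  obtain ⟨a, ha, hmin⟩ := Z.exists_min_image (fun a => (y - a).val) ⟨x, hx⟩
  refine ⟨a, ha, fun hsa => ?_⟩
  have hP : 1 < #P := one_lt_card.2 ⟨a, hZP ha, y, hy, ne_of_mem_of_not_mem ha hyZ⟩
  have hgap : (cyclicSucc P a - a).val ≤ (y - a).val :=
    val_cyclicSucc_sub hP a ▸ cyclicGap_le hy (ne_of_mem_of_not_mem ha hyZ).symm
  have hcloser : (y - cyclicSucc P a).val = (y - a).val - (cyclicSucc P a - a).val := by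
    rw [← val_sub hgap, sub_sub_sub_cancel_right]
  have := hmin _ hsa
  have := cyclicGap_pos hP a
  rw [val_cyclicSucc_sub hP] at hgap hcloser
  omega

theorem eq_of_add_natCast_eq_of_le (hx : x ∈ P) (hy : y ∈ P) {i j : ℕ} (hj : j < cyclicGap P y)
    (hij : i ≤ j) (h : x + i = y + j) : x = y := by
  by_contra hxy
  have hP : 1 < #P := one_lt_card.2 ⟨x, hx, y, hy, hxy⟩
  have hval : (x - y).val = j - i := by
    rw [show x - y = ((j - i : ℕ) : ZMod n) by push_cast [Nat.cast_sub hij]; linear_combination h,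
      val_natCast_of_lt (by have := cyclicGap_lt hP y; omega)]
  have := cyclicGap_le hx hxy
  omega

theorem sum_cyclicGap_le (hP : 1 < #P) : ∑ x ∈ P, cyclicGap P x ≤ n := by
  -- `(x, i) ↦ x + i` maps the disjoint arcs `[x, x + cyclicGap P x)` injectively into `ZMod n`
  have hinj : ((P.sigma fun x => range (cyclicGap P x)) : Set (Σ _ : ZMod n, ℕ)).InjOn
      fun p => p.1 + (p.2 : ZMod n) := by
    rintro ⟨x, i⟩ hxi ⟨y, j⟩ hyj h
    simp only [coe_sigma, Set.mem_sigma_iff, mem_coe, mem_range] at hxi hyj h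
    obtain rfl : x = y := by
      rcases le_total i j with hij | hji
      · exact eq_of_add_natCast_eq_of_le hxi.1 hyj.1 hyj.2 hij h
      · exact (eq_of_add_natCast_eq_of_le hyj.1 hxi.1 hxi.2 hji h.symm).symm
    have hij := congrArg val (add_left_cancel h)
    rw [val_natCast_of_lt (hxi.2.trans (cyclicGap_lt hP x)),
      val_natCast_of_lt (hyj.2.trans (cyclicGap_lt hP x))] at hij
    rw [hij]
  calc ∑ x ∈ P, cyclicGap P x = #(P.sigma fun x => range (cyclicGap P x)) := by simp
    _ ≤ #(univ : Finset (ZMod n)) :=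
      card_le_card_of_injOn _ (fun _ _ => mem_coe.2 (mem_univ _)) hinj
    _ = n := by simp

end ZMod

theorem Finset.card_filter_mul_add_card_filter_not_mul_le_sum {ι : Type*} (s : Finset ι)
    (f : ι → ℕ) (r : ℕ) {m : ℕ} (hm : ∀ x ∈ s, m ≤ f x) :
    #{x ∈ s | r ≤ f x} * r + #{x ∈ s | ¬ r ≤ f x} * m ≤ ∑ x ∈ s, f x := by
  rw [← sum_filter_add_sum_filter_not s (fun x => r ≤ f x)]
  gcongr ?_ + ?_
  · simpa using card_nsmul_le_sum _ f r fun x hx => (mem_filter.1 hx).2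
  · simpa using card_nsmul_le_sum _ f m fun x hx => hm x (mem_filter.1 hx).1

theorem Finset.one_lt_card_union {α : Type*} [DecidableEq α] {s t : Finset α}
    (h : ∃ a ∈ s, ∃ b ∈ t, a ≠ b) : 1 < #(s ∪ t) := by
  obtain ⟨a, ha, b, hb, hab⟩ := h
  exact one_lt_card.2 ⟨a, mem_union_left _ ha, b, mem_union_right _ hb, hab⟩

section Scheme

open ZMod

variable {n r : ℕ} {P Z1 Z2 : Finset (ZMod n)} {x : ZMod n}

noncomputable def longGaps (r : ℕ) (P : Finset (ZMod n)) : Finset (ZMod n) :=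
  {x ∈ P | r ≤ cyclicGap P x}

theorem ArcWithin.union (h1 : ArcWithin n Z1) (h2 : ArcWithin n Z2)
    (h12 : ArcBetween n r Z1 Z2) (h21 : ArcBetween n r Z2 Z1) (hr : 2 ≤ r) :
    ArcWithin n (Z1 ∪ Z2) := by
  intro x hx y hy hxy
  rcases mem_union.1 hx with hx | hx <;> rcases mem_union.1 hy with hy | hy
  · exact h1 x hx y hy hxy
  · exact hr.trans (h12 x hx y hy hxy)
  · exact hr.trans (h21 x hx y hy hxy)
  · exact h2 x hx y hy hxy

variable [NeZero n]

theorem ArcWithin.two_le_cyclicGap (h : ArcWithin n P) (hP : 1 < #P) (hx : x ∈ P) :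
    2 ≤ cyclicGap P x :=
  le_cyclicGap_of_arcBetween (W := P) hP h hx (mem_of_mem_erase (cyclicSucc_mem_erase hP x))

theorem mem_longGaps_of_crossing (h12 : ArcBetween n r Z1 Z2) (h21 : ArcBetween n r Z2 Z1)
    (hP : 1 < #(Z1 ∪ Z2))
    (hx : x ∈ Z1 ∧ cyclicSucc (Z1 ∪ Z2) x ∈ Z2 ∨ x ∈ Z2 ∧ cyclicSucc (Z1 ∪ Z2) x ∈ Z1) :
    x ∈ longGaps r (Z1 ∪ Z2) := by
  rcases hx with ⟨hx, hsx⟩ | ⟨hx, hsx⟩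
  · exact mem_filter.2 ⟨mem_union_left _ hx, le_cyclicGap_of_arcBetween hP h12 hx hsx⟩
  · exact mem_filter.2 ⟨mem_union_right _ hx, le_cyclicGap_of_arcBetween hP h21 hx hsx⟩

theorem inter_subset_longGaps (h12 : ArcBetween n r Z1 Z2) (h21 : ArcBetween n r Z2 Z1)
    (hP : 1 < #(Z1 ∪ Z2)) : Z1 ∩ Z2 ⊆ longGaps r (Z1 ∪ Z2) := by
  intro c hc
  obtain ⟨hc1, hc2⟩ := mem_inter.1 hc
  refine mem_longGaps_of_crossing h12 h21 hP ?_
  rcases mem_union.1 (mem_of_mem_erase (cyclicSucc_mem_erase hP c)) with hs | hs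
  · exact Or.inr ⟨hc2, hs⟩
  · exact Or.inl ⟨hc1, hs⟩

theorem one_lt_card_longGaps (h12 : ArcBetween n r Z1 Z2) (h21 : ArcBetween n r Z2 Z1)
    (hnontriv : ∃ z1 ∈ Z1, ∃ z2 ∈ Z2, z1 ≠ z2) : 1 < #(longGaps r (Z1 ∪ Z2)) := by
  have hP := one_lt_card_union hnontriv
  set P := Z1 ∪ Z2
  rcases (Z1 ∩ Z2).eq_empty_or_nonempty with hC | ⟨c, hc⟩
  · -- going around from `z1` the cycle crosses from `Z1` to `Z2`, and from `z2` back to `Z1`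
    obtain ⟨z1, hz1, z2, hz2, -⟩ := hnontriv
    have hd : Disjoint Z1 Z2 := disjoint_iff_inter_eq_empty.2 hC
    obtain ⟨a, ha, hsa⟩ := exists_mem_cyclicSucc_notMem subset_union_left hz1
      (mem_union_right _ hz2) (disjoint_right.1 hd hz2)
    obtain ⟨b, hb, hsb⟩ := exists_mem_cyclicSucc_notMem subset_union_right hz2
      (mem_union_left _ hz1) (disjoint_left.1 hd hz1)
    have hsP : ∀ y, cyclicSucc P y ∈ Z1 ∪ Z2 :=
      fun y => mem_of_mem_erase (cyclicSucc_mem_erase hP y)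
    refine one_lt_card.2 ⟨a, mem_longGaps_of_crossing h12 h21 hP (Or.inl ⟨ha, ?_⟩),
      b, mem_longGaps_of_crossing h12 h21 hP (Or.inr ⟨hb, ?_⟩),
      ne_of_mem_of_not_mem ha (disjoint_right.1 hd hb)⟩
    · exact (mem_union.1 (hsP a)).resolve_left hsa
    · exact (mem_union.1 (hsP b)).resolve_right hsb
  · -- both `c` and its predecessor start long gaps
    obtain ⟨hc1, hc2⟩ := mem_inter.1 hc
    have hcP : c ∈ P := mem_union_left _ hc1
    obtain ⟨p, hp, hsp⟩ := exists_mem_cyclicSucc_notMem (erase_subset c P)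
      (cyclicSucc_mem_erase hP c) hcP (notMem_erase c P)
    have hpc : cyclicSucc P p = c := by
      by_contra hne
      exact hsp (mem_erase.2 ⟨hne, mem_of_mem_erase (cyclicSucc_mem_erase hP p)⟩)
    have hpT : p ∈ longGaps r P := by
      refine mem_longGaps_of_crossing h12 h21 hP ?_
      rw [hpc]
      rcases mem_union.1 (mem_of_mem_erase hp) with hp | hp
      · exact Or.inl ⟨hp, hc2⟩
      · exact Or.inr ⟨hp, hc1⟩
    exact one_lt_card.2 ⟨p, hpT, c, inter_subset_longGaps h12 h21 hP hc, ne_of_mem_erase hp⟩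

end Scheme

theorem stmt5_general (n r : ℕ) (hn : 3 ≤ n)
    (Z1 Z2 : Finset (ZMod n))
    (h1 : ArcWithin n Z1) (h2 : ArcWithin n Z2)
    (h12 : ArcBetween n r Z1 Z2) (h21 : ArcBetween n r Z2 Z1)
    (hnontriv : ∃ z1 ∈ Z1, ∃ z2 ∈ Z2, z1 ≠ z2)
    (hr4 : 4 ≤ r)
    : 2 * ((Z1.card : ℤ) + Z2.card) + 2 * r - 8 ≤ (n : ℤ) := by
  have : NeZero n := ⟨by omega⟩
  have hP := one_lt_card_union hnontriv
  set P := Z1 ∪ Z2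
  have hgaps : #(longGaps r P) * r + #{x ∈ P | ¬ r ≤ ZMod.cyclicGap P x} * 2 ≤ n :=
    (card_filter_mul_add_card_filter_not_mul_le_sum P _ r fun x hx =>
      (h1.union h2 h12 h21 (by omega)).two_le_cyclicGap hP hx).trans (ZMod.sum_cyclicGap_le hP)
  have hsplit : #(longGaps r P) + #{x ∈ P | ¬ r ≤ ZMod.cyclicGap P x} = #P :=
    card_filter_add_card_filter_not _
  have hunion : #P + #(Z1 ∩ Z2) = #Z1 + #Z2 := card_union_add_card_inter Z1 Z2
  have hC : #(Z1 ∩ Z2) ≤ #(longGaps r P) := card_le_card (inter_subset_longGaps h12 h21 hP)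
  have hT : 1 < #(longGaps r P) := one_lt_card_longGaps h12 h21 hnontriv
  zify at hgaps hsplit hunion hC hT hr4
  rcases le_or_gt (#(Z1 ∩ Z2) : ℤ) 2 with hk | hk
  · nlinarith
  · nlinarith

theorem stmt5 (n r : ℕ) (hn : 3 ≤ n) (hr : 2 ≤ r)
    (Z1 Z2 : Finset (ZMod n))
    (h1 : ArcWithin n Z1) (h2 : ArcWithin n Z2)
    (h12 : ArcBetween n r Z1 Z2) (h21 : ArcBetween n r Z2 Z1)
    (hnontriv : ∃ z1 ∈ Z1, ∃ z2 ∈ Z2, z1 ≠ z2)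
    (hr4 : 4 ≤ r) (hcard : 4 ≤ Z1.card + Z2.card)
    : 2 * ((Z1.card : ℤ) + Z2.card) + 2 * r - 8 ≤ (n : ℤ) :=
  stmt5_general n r hn Z1 Z2 h1 h2 h12 h21 hnontriv hr4
end

section
/- Let Q be a cycle in a graph and let (Z1, Z2, Z3) be a nontrivial (Q,r)-scheme with |Z2| = |Z3| = 1. Then |Q| ≥ 2|Z1| + 3r − 6. -/
namespace Stmt6Aux
set_option linter.unusedSectionVars false
variable {n : ℕ} [NeZero n]
def blk (n : ℕ) (u : ZMod n) (c : ℕ) : Finset (ZMod n) :=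
  (Finset.range c).image (fun i : ℕ => u + (i : ZMod n))
def blkL (n : ℕ) (u : ZMod n) (c : ℕ) : Finset (ZMod n) :=
  (Finset.Icc 1 c).image (fun j : ℕ => u - (j : ZMod n))
omit [NeZero n] in
lemma mem_blk {u w : ZMod n} {c : ℕ} :
    w ∈ blk n u c ↔ ∃ i, i < c ∧ w = u + (i : ZMod n) := by
  simp [blk, eq_comm, and_comm]
omit [NeZero n] in
lemma mem_blkL {u w : ZMod n} {c : ℕ} :
    w ∈ blkL n u c ↔ ∃ j, 1 ≤ j ∧ j ≤ c ∧ w = u - (j : ZMod n) := by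
  simp [blkL, eq_comm, and_assoc]
omit [NeZero n] in
lemma helper_eq {u v : ZMod n} {i j : ℕ} (hij : j ≤ i)
    (h : u + (i : ZMod n) = v + (j : ZMod n)) :
    v = u + ((i - j : ℕ) : ZMod n) := by
  have h2 : ((i - j : ℕ) : ZMod n) = (i : ZMod n) - (j : ZMod n) := by
    push_cast [Nat.cast_sub hij]; ring
  rw [h2]; linear_combination -h
lemma helper_val {u v : ZMod n} {i j : ℕ} (hij : j ≤ i) (hlt : i - j < n)
    (h : u + (i : ZMod n) = v + (j : ZMod n)) : (v - u).val = i - j := by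
  rw [helper_eq hij h, add_sub_cancel_left, ZMod.val_natCast_of_lt hlt]
lemma card_blk {u : ZMod n} {c : ℕ} (hc : c ≤ n) : (blk n u c).card = c := by
  rw [blk, Finset.card_image_of_injOn, Finset.card_range]
  intro i hi j hj h
  simp only [Finset.coe_range, Set.mem_Iio] at hi hj
  have : ((i : ZMod n)) = (j : ZMod n) := add_left_cancel h
  have := congrArg ZMod.val this
  rwa [ZMod.val_natCast_of_lt (lt_of_lt_of_le hi hc),
    ZMod.val_natCast_of_lt (lt_of_lt_of_le hj hc)] at this
lemma card_blkL {u : ZMod n} {c : ℕ} (hc : c < n) : (blkL n u c).card = c := by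
  rw [blkL, Finset.card_image_of_injOn, Nat.card_Icc]
  · omega
  intro i hi j hj h
  simp only [Finset.coe_Icc, Set.mem_Icc] at hi hj
  have : ((i : ZMod n)) = (j : ZMod n) := sub_right_injective h
  have := congrArg ZMod.val this
  rwa [ZMod.val_natCast_of_lt (lt_of_le_of_lt hi.2 hc),
    ZMod.val_natCast_of_lt (lt_of_le_of_lt hj.2 hc)] at this
lemma blk_disj_blk {u v : ZMod n} {c d : ℕ} (hc : c ≤ n) (hd : d ≤ n)
    (huv : u ≠ v)
    (h1 : ∀ e, 1 ≤ e → e < c → (v - u).val ≠ e)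
    (h2 : ∀ e, 1 ≤ e → e < d → (u - v).val ≠ e) :
    Disjoint (blk n u c) (blk n v d) := by
  rw [Finset.disjoint_left]
  rintro w hw hw'
  obtain ⟨i, hi, rfl⟩ := mem_blk.mp hw
  obtain ⟨j, hj, heq⟩ := mem_blk.mp hw'
  rcases lt_trichotomy i j with h | h | h
  · exact h2 (j - i) (by omega) (by omega)
      (helper_val (le_of_lt h) (by omega) heq.symm)
  · subst h
    have hv := helper_eq le_rfl heq
    simp only [Nat.sub_self, Nat.cast_zero, add_zero] at hv
    exact huv hv.symm
  · exact h1 (i - j) (by omega) (by omega) (helper_val (le_of_lt h) (by omega) heq)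
lemma blk_disj_blkL {u v : ZMod n} {c d : ℕ} (hcd : c + d ≤ n)
    (h : ∀ e, 1 ≤ e → e ≤ c - 1 + d → (v - u).val ≠ e) :
    Disjoint (blk n u c) (blkL n v d) := by
  rw [Finset.disjoint_left]
  rintro w hw hw'
  obtain ⟨i, hi, rfl⟩ := mem_blk.mp hw
  obtain ⟨j, hj1, hj2, heq⟩ := mem_blkL.mp hw'
  have heq2 : u + ((i + j : ℕ) : ZMod n) = v + ((0 : ℕ) : ZMod n) := by
    push_cast
    rw [eq_sub_iff_add_eq] at heq
    linear_combination heq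
  exact h (i + j) (by omega) (by omega)
    (by simpa using helper_val (by omega) (by omega) heq2)
lemma blkL_disj_blkL {u v : ZMod n} {c d : ℕ} (hc : c < n) (hd : d < n)
    (huv : u ≠ v)
    (h1 : ∀ e, 1 ≤ e → e < c → (u - v).val ≠ e)
    (h2 : ∀ e, 1 ≤ e → e < d → (v - u).val ≠ e) :
    Disjoint (blkL n u c) (blkL n v d) := by
  rw [Finset.disjoint_left]
  rintro w hw hw'
  obtain ⟨i, hi1, hi2, rfl⟩ := mem_blkL.mp hw
  obtain ⟨j, hj1, hj2, heq⟩ := mem_blkL.mp hw'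
  have heq2 : v + ((i : ℕ) : ZMod n) = u + ((j : ℕ) : ZMod n) := by
    linear_combination -heq
  rcases lt_trichotomy i j with h | h | h
  · exact h2 (j - i) (by omega) (by omega) (helper_val (le_of_lt h) (by omega) heq2.symm)
  · subst h
    have hv := helper_eq le_rfl heq2
    simp only [Nat.sub_self, Nat.cast_zero, add_zero] at hv
    exact huv hv
  · exact h1 (i - j) (by omega) (by omega) (helper_val (le_of_lt h) (by omega) heq2)
end Stmt6Aux

open Stmt6Aux

theorem stmt6 (n r : ℕ) (hn : 3 ≤ n) (hr : 2 ≤ r)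
    (Z1 Z2 Z3 : Finset (ZMod n))
    (h1 : ArcWithin n Z1) (h2 : ArcWithin n Z2) (h3 : ArcWithin n Z3)
    (h12 : ArcBetween n r Z1 Z2) (h21 : ArcBetween n r Z2 Z1)
    (h13 : ArcBetween n r Z1 Z3) (h31 : ArcBetween n r Z3 Z1)
    (h23 : ArcBetween n r Z2 Z3) (h32 : ArcBetween n r Z3 Z2)
    (hnontriv : ∃ z1 ∈ Z1, ∃ z2 ∈ Z2, ∃ z3 ∈ Z3,
      z1 ≠ z2 ∧ z1 ≠ z3 ∧ z2 ≠ z3)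
    (hZ2 : Z2.card = 1) (hZ3 : Z3.card = 1)
    : 2 * (Z1.card : ℤ) + 3 * r - 6 ≤ (n : ℤ) := by
  have hNZ : NeZero n := ⟨by omega⟩
  obtain ⟨z, hz, a, haZ, b, hbZ, hza, hzb, hab⟩ := hnontriv
  have hA : Z2 = {a} := by
    obtain ⟨a', ha'⟩ := Finset.card_eq_one.mp hZ2
    rw [ha'] at haZ ⊢
    simp only [Finset.mem_singleton] at haZ
    rw [haZ]
  have hB : Z3 = {b} := by
    obtain ⟨b', hb'⟩ := Finset.card_eq_one.mp hZ3
    rw [hb'] at hbZ ⊢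
    simp only [Finset.mem_singleton] at hbZ
    rw [hbZ]
  have haZ2 : a ∈ Z2 := by simp [hA]
  have hbZ3 : b ∈ Z3 := by simp [hB]
  have ha2 : ∀ x ∈ Z1, x ≠ a → r ≤ (a - x).val := fun x hx hne => h12 x hx a haZ2 hne
  have ha2' : ∀ x ∈ Z1, x ≠ a → r ≤ (x - a).val := fun x hx hne => h21 a haZ2 x hx (Ne.symm hne)
  have hb2 : ∀ x ∈ Z1, x ≠ b → r ≤ (b - x).val := fun x hx hne => h13 x hx b hbZ3 hne
  have hb2' : ∀ x ∈ Z1, x ≠ b → r ≤ (x - b).val := fun x hx hne => h31 b hbZ3 x hx (Ne.symm hne)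
  have hα : r ≤ (b - a).val := h23 a haZ2 b hbZ3 hab
  have hβ : r ≤ (a - b).val := h32 b hbZ3 a haZ2 hab.symm
  set α := (b - a).val with hαdef
  set β := (a - b).val with hβdef
  have hab0 : (b - a) ≠ 0 := sub_ne_zero.mpr hab.symm
  have hsum : α + β = n := by
    have hneg : a - b = -(b - a) := by ring
    have : NeZero (b - a) := ⟨hab0⟩
    have hlt := ZMod.val_lt (b - a)
    have h0 : (b - a).val ≠ 0 := by simpa [ZMod.val_eq_zero] using hab0
    rw [hβdef, hneg, ZMod.val_neg_of_ne_zero]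
    omega
  have h2r : 2 * r ≤ n := by omega
  set ca := min (β - r) (r - 2) with hcadef
  set cb := min (α - r) (r - 2) with hcbdef
  have hca1 : ca ≤ β - r := min_le_left _ _
  have hca2 : ca ≤ r - 2 := min_le_right _ _
  have hcb1 : cb ≤ α - r := min_le_left _ _
  have hcb2 : cb ≤ r - 2 := min_le_right _ _
  set Z1' := (Z1.erase a).erase b with hZ1'def
  have hmem : ∀ x ∈ Z1', x ∈ Z1 ∧ x ≠ a ∧ x ≠ b := by
    intro x hx
    have e1 := Finset.mem_erase.mp hx
    have e2 := Finset.mem_erase.mp e1.2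
    exact ⟨e2.2, e2.1, e1.1⟩
  have hz1' : z ∈ Z1' := Finset.mem_erase.mpr ⟨hzb, Finset.mem_erase.mpr ⟨hza, hz⟩⟩
  have hk : Z1.card ≤ Z1'.card + 2 := by
    have e1 := Finset.pred_card_le_card_erase (s := Z1) (a := a)
    have e2 : (Z1.erase a).card ≤ Z1'.card + 1 := by
      rw [hZ1'def]
      have := Finset.pred_card_le_card_erase (s := Z1.erase a) (a := b)
      omega
    omega
  have hkpos : 1 ≤ Z1'.card := Finset.card_pos.mpr ⟨z, hz1'⟩
  set P1 := Z1'.biUnion (fun x => blk n x 2) with hP1def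
  set P2 := blk n a r with hP2def
  set P3 := blk n b r with hP3def
  set P4 := blkL n a ca with hP4def
  set P5 := blkL n b cb with hP5def
  -- pairwise disjointness
  have D12 : Disjoint P1 P2 := by
    rw [hP1def, Finset.disjoint_biUnion_left]
    intro x hx
    obtain ⟨hx1, hxa, hxb⟩ := hmem x hx
    refine blk_disj_blk (by omega) (by omega) hxa ?_ ?_
    · intro e he1 he2 hval; have := ha2 x hx1 hxa; omega
    · intro e he1 he2 hval; have := ha2' x hx1 hxa; omega
  have D13 : Disjoint P1 P3 := by
    rw [hP1def, Finset.disjoint_biUnion_left]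
    intro x hx
    obtain ⟨hx1, hxa, hxb⟩ := hmem x hx
    refine blk_disj_blk (by omega) (by omega) hxb ?_ ?_
    · intro e he1 he2 hval; have := hb2 x hx1 hxb; omega
    · intro e he1 he2 hval; have := hb2' x hx1 hxb; omega
  have D14 : Disjoint P1 P4 := by
    rw [hP1def, Finset.disjoint_biUnion_left]
    intro x hx
    obtain ⟨hx1, hxa, hxb⟩ := hmem x hx
    refine blk_disj_blkL (by omega) ?_
    intro e he1 he2 hval; have := ha2 x hx1 hxa; omega
  have D15 : Disjoint P1 P5 := by
    rw [hP1def, Finset.disjoint_biUnion_left]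
    intro x hx
    obtain ⟨hx1, hxa, hxb⟩ := hmem x hx
    refine blk_disj_blkL (by omega) ?_
    intro e he1 he2 hval; have := hb2 x hx1 hxb; omega
  have D23 : Disjoint P2 P3 := by
    refine blk_disj_blk (by omega) (by omega) hab ?_ ?_
    · intro e he1 he2 hval; omega
    · intro e he1 he2 hval; omega
  have D24 : Disjoint P2 P4 := by
    refine blk_disj_blkL (by omega) ?_
    intro e he1 he2 hval
    rw [sub_self, ZMod.val_zero] at hval; omega
  have D25 : Disjoint P2 P5 := by
    refine blk_disj_blkL (by omega) ?_
    intro e he1 he2 hval; omega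
  have D34 : Disjoint P3 P4 := by
    refine blk_disj_blkL (by omega) ?_
    intro e he1 he2 hval; omega
  have D35 : Disjoint P3 P5 := by
    refine blk_disj_blkL (by omega) ?_
    intro e he1 he2 hval
    rw [sub_self, ZMod.val_zero] at hval; omega
  have D45 : Disjoint P4 P5 := by
    refine blkL_disj_blkL (by omega) (by omega) hab ?_ ?_
    · intro e he1 he2 hval; omega
    · intro e he1 he2 hval; omega
  have hP1card : P1.card = 2 * Z1'.card := by
    rw [hP1def, Finset.card_biUnion]
    · rw [Finset.sum_congr rfl (fun x _ => card_blk (by omega))]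
      simp [Finset.sum_const, mul_comm]
    · intro x hx y hy hxy
      obtain ⟨hx1, _, _⟩ := hmem x hx
      obtain ⟨hy1, _, _⟩ := hmem y hy
      refine blk_disj_blk (by omega) (by omega) hxy ?_ ?_
      · intro e he1 he2 hval; have := h1 x hx1 y hy1 hxy; omega
      · intro e he1 he2 hval; have := h1 y hy1 x hx1 (Ne.symm hxy); omega
  have hUcard : (P1 ∪ P2 ∪ P3 ∪ P4 ∪ P5).card = 2 * Z1'.card + r + r + ca + cb := by
    rw [Finset.card_union_of_disjoint (by
          rw [Finset.disjoint_union_left, Finset.disjoint_union_left,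
            Finset.disjoint_union_left]
          exact ⟨⟨⟨D15, D25⟩, D35⟩, D45⟩),
        Finset.card_union_of_disjoint (by
          rw [Finset.disjoint_union_left, Finset.disjoint_union_left]
          exact ⟨⟨D14, D24⟩, D34⟩),
        Finset.card_union_of_disjoint (by
          rw [Finset.disjoint_union_left]
          exact ⟨D13, D23⟩),
        Finset.card_union_of_disjoint D12,
        hP1card, hP2def, hP3def, hP4def, hP5def,
        card_blk (by omega), card_blk (by omega), card_blkL (by omega),
        card_blkL (by omega)]
  have hle : (P1 ∪ P2 ∪ P3 ∪ P4 ∪ P5).card ≤ n := by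
    refine le_trans (Finset.card_le_univ _) ?_
    rw [ZMod.card]
  have key : 2 * Z1.card + 3 * r ≤ n + 6 := by omega
  omega
end

section
/- Let Q be a cycle in a graph and let (Z1, Z2, Z3, Z4) be a nontrivial (Q,r)-scheme with |Z2| = |Z3| = |Z4| = 1. Then |Q| ≥ 2|Z1| + 4r − 8. -/
/- ### Auxiliary lemmas -/

lemma spaced_card (A B : ℕ) (P : Finset ℕ) (hmem : ∀ p ∈ P, A ≤ p ∧ p ≤ B)
    (hgap : ∀ p ∈ P, ∀ q ∈ P, p < q → p + 2 ≤ q) (hne : P.Nonempty) :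
    A + 2 * P.card ≤ B + 2 := by
  obtain ⟨p0, hp0⟩ := hne
  have hAB : A ≤ B := le_trans (hmem p0 hp0).1 (hmem p0 hp0).2
  have hcard : P.card ≤ (B - A) / 2 + 1 := by
    have hmaps : ∀ p ∈ P, (p - A) / 2 ∈ Finset.range ((B - A) / 2 + 1) := by
      intro p hp
      have := hmem p hp
      simp only [Finset.mem_range]
      omega
    have hinj : Set.InjOn (fun p => (p - A) / 2) P := by
      intro p hp q hq hpq
      simp only at hpq
      by_contra hne'
      rcases Nat.lt_or_ge p q with h | h
      · have h2 := hgap p hp q hq h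
        have h1 := (hmem p hp).1
        omega
      · rcases Nat.lt_or_ge q p with h' | h'
        · have h2 := hgap q hq p hp h'
          have h1 := (hmem q hq).1
          omega
        · omega
    calc P.card = (P.image (fun p => (p - A) / 2)).card :=
          (Finset.card_image_of_injOn hinj).symm
      _ ≤ (Finset.range ((B - A) / 2 + 1)).card := by
          apply Finset.card_le_card
          intro x hx
          obtain ⟨p, hp, rfl⟩ := Finset.mem_image.1 hx
          exact hmaps p hp
      _ = (B - A) / 2 + 1 := Finset.card_range _
  omega

lemma zval_sub_of_le {n : ℕ} [NeZero n] {u v : ZMod n} (h : v.val ≤ u.val) :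
    (u - v).val = u.val - v.val := ZMod.val_sub h

lemma zval_sub_of_lt {n : ℕ} [NeZero n] {u v : ZMod n} (h : u.val < v.val) :
    (u - v).val = u.val + n - v.val := by
  have h1 : (v - u).val = v.val - u.val := ZMod.val_sub h.le
  have hvu : v - u ≠ 0 := by
    intro h0
    rw [sub_eq_zero] at h0
    rw [h0] at h
    omega
  haveI : NeZero (v - u) := ⟨hvu⟩
  have h2 : (-(v - u)).val = n - (v - u).val := ZMod.val_neg_of_ne_zero _
  have h3 : u - v = -(v - u) := by ring
  have h4 := ZMod.val_lt v
  rw [h3, h2, h1]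
  omega

lemma zval_sub_add {n : ℕ} [NeZero n] {u v : ZMod n} (h : u ≠ v) :
    (u - v).val + (v - u).val = n := by
  rcases Nat.lt_or_ge u.val v.val with hlt | hge
  · rw [zval_sub_of_lt hlt, zval_sub_of_le hlt.le]
    have := ZMod.val_lt v
    omega
  · have hvu : v.val < u.val :=
      lt_of_le_of_ne hge (fun e => h ((ZMod.val_injective n e).symm))
    rw [zval_sub_of_le hvu.le, zval_sub_of_lt hvu]
    have := ZMod.val_lt u
    omega

lemma arc_bound {n : ℕ} [NeZero n] {r : ℕ} (hr : 2 ≤ r) (S : Finset (ZMod n))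
    (hgap : ∀ x ∈ S, ∀ y ∈ S, x ≠ y → 2 ≤ (y - x).val)
    (u v : ZMod n)
    (hu : ∀ x ∈ S, r ≤ (x - u).val)
    (hv : ∀ x ∈ S, r ≤ (v - x).val)
    (hL : r ≤ (v - u).val) :
    2 * (S.filter (fun x => (x - u).val < (v - u).val)).card + r ≤ (v - u).val ∧
    ((S.filter (fun x => (x - u).val < (v - u).val)).Nonempty →
      2 * (S.filter (fun x => (x - u).val < (v - u).val)).card + 2 * r ≤ (v - u).val + 2) := by
  classical
  set L := (v - u).val with hLdef
  set T := S.filter (fun x => (x - u).val < L) with hT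
  have ginj : Set.InjOn (fun x : ZMod n => (x - u).val) T := by
    intro x _ y _ hxy
    simp only at hxy
    have h1 : x - u = y - u := ZMod.val_injective n hxy
    exact sub_left_inj.mp h1
  have key2 : T.Nonempty → 2 * T.card + 2 * r ≤ L + 2 := by
    intro hne
    set P := T.image (fun x => (x - u).val) with hP
    have hcardP : P.card = T.card := Finset.card_image_of_injOn ginj
    have hmem : ∀ p ∈ P, r ≤ p ∧ p ≤ L - r := by
      intro p hp
      obtain ⟨x, hx, rfl⟩ := Finset.mem_image.1 hp
      obtain ⟨hxS, hxL⟩ := Finset.mem_filter.1 hx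
      refine ⟨hu x hxS, ?_⟩
      have hvx : (v - x).val = L - (x - u).val := by
        have h1 : (x - u).val ≤ (v - u).val := le_of_lt hxL
        have h2 := zval_sub_of_le h1
        rwa [show (v - u) - (x - u) = v - x by ring] at h2
      have h3 := hv x hxS
      omega
    have hgapP : ∀ p ∈ P, ∀ q ∈ P, p < q → p + 2 ≤ q := by
      intro p hp q hq hpq
      obtain ⟨x, hx, rfl⟩ := Finset.mem_image.1 hp
      obtain ⟨y, hy, rfl⟩ := Finset.mem_image.1 hq
      have hxS := (Finset.mem_filter.1 hx).1
      have hyS := (Finset.mem_filter.1 hy).1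
      have hxy : x ≠ y := by
        rintro rfl
        omega
      have h2 := hgap x hxS y hyS hxy
      have h3 : (y - x).val = (y - u).val - (x - u).val := by
        have h4 := zval_sub_of_le (le_of_lt hpq)
        rwa [show (y - u) - (x - u) = y - x by ring] at h4
      omega
    have hPne : P.Nonempty := hne.image _
    have := spaced_card r (L - r) P hmem hgapP hPne
    omega
  constructor
  · rcases T.eq_empty_or_nonempty with h | h
    · rw [h]
      simpa using hL
    · have := key2 h
      omega
  · exact key2

lemma key_lemma (n r : ℕ) (hn : 3 ≤ n) (hr : 2 ≤ r) (Z1 : Finset (ZMod n))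
    (h1 : ArcWithin n Z1)
    (w2 w3 w4 : ZMod n)
    (hB2 : ∀ x ∈ Z1, x ≠ w2 → r ≤ (x - w2).val ∧ r ≤ (w2 - x).val)
    (hB3 : ∀ x ∈ Z1, x ≠ w3 → r ≤ (x - w3).val ∧ r ≤ (w3 - x).val)
    (hB4 : ∀ x ∈ Z1, x ≠ w4 → r ≤ (x - w4).val ∧ r ≤ (w4 - x).val)
    (ha : r ≤ (w3 - w2).val) (hb : r ≤ (w4 - w3).val) (hc : r ≤ (w2 - w4).val)
    (horder : (w3 - w2).val + (w4 - w3).val + (w2 - w4).val = n)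
    (hz : ∃ z ∈ Z1, z ≠ w2 ∧ z ≠ w3 ∧ z ≠ w4) :
    2 * (Z1.card : ℤ) + 4 * (r : ℤ) - 8 ≤ (n : ℤ) := by
  classical
  haveI : NeZero n := ⟨by omega⟩
  set Z1' := Z1 \ {w2, w3, w4} with hZ1'
  have hmem' : ∀ x ∈ Z1', x ∈ Z1 ∧ x ≠ w2 ∧ x ≠ w3 ∧ x ≠ w4 := by
    intro x hx
    have h := Finset.mem_sdiff.1 hx
    simp only [Finset.mem_insert, Finset.mem_singleton] at h
    tauto
  have hgap' : ∀ x ∈ Z1', ∀ y ∈ Z1', x ≠ y → 2 ≤ (y - x).val :=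
    fun x hx y hy => h1 x (hmem' x hx).1 y (hmem' y hy).1
  have harcA := arc_bound hr Z1' hgap' w2 w3
      (fun x hx => (hB2 x (hmem' x hx).1 (hmem' x hx).2.1).1)
      (fun x hx => (hB3 x (hmem' x hx).1 (hmem' x hx).2.2.1).2) ha
  have harcB := arc_bound hr Z1' hgap' w3 w4
      (fun x hx => (hB3 x (hmem' x hx).1 (hmem' x hx).2.2.1).1)
      (fun x hx => (hB4 x (hmem' x hx).1 (hmem' x hx).2.2.2).2) hb
  have harcC := arc_bound hr Z1' hgap' w4 w2
      (fun x hx => (hB4 x (hmem' x hx).1 (hmem' x hx).2.2.2).1)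
      (fun x hx => (hB2 x (hmem' x hx).1 (hmem' x hx).2.1).2) hc
  set Ta := Z1'.filter (fun x => (x - w2).val < (w3 - w2).val) with hTa
  set Tb := Z1'.filter (fun x => (x - w3).val < (w4 - w3).val) with hTb
  set Tc := Z1'.filter (fun x => (x - w4).val < (w2 - w4).val) with hTc
  have hab : (w4 - w2).val = (w3 - w2).val + (w4 - w3).val := by
    rw [show w4 - w2 = (w4 - w3) + (w3 - w2) by ring, ZMod.val_add,
      Nat.mod_eq_of_lt (by omega)]
    omega
  have hptw : ∀ x ∈ Z1',
      ((x - w2).val < (w3 - w2).val ∨ (x - w3).val < (w4 - w3).val ∨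
        (x - w4).val < (w2 - w4).val) ∧
      ¬((x - w2).val < (w3 - w2).val ∧ (x - w3).val < (w4 - w3).val) ∧
      ¬((x - w2).val < (w3 - w2).val ∧ (x - w4).val < (w2 - w4).val) ∧
      ¬((x - w3).val < (w4 - w3).val ∧ (x - w4).val < (w2 - w4).val) := by
    intro x hx
    obtain ⟨hxZ, hx2, hx3, hx4⟩ := hmem' x hx
    have p2lt : (x - w2).val < n := ZMod.val_lt _
    have p2pos : 0 < (x - w2).val := ZMod.val_pos.2 (sub_ne_zero.2 hx2)
    have hne3 : (x - w2).val ≠ (w3 - w2).val := fun h =>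
      hx3 (sub_left_inj.mp (ZMod.val_injective n h))
    have hne4 : (x - w2).val ≠ (w3 - w2).val + (w4 - w3).val := fun h =>
      hx4 (sub_left_inj.mp (ZMod.val_injective n (h.trans hab.symm)))
    have hp3 : (x - w3).val =
        (if (x - w2).val < (w3 - w2).val then (x - w2).val + n - (w3 - w2).val
          else (x - w2).val - (w3 - w2).val) := by
      have he : (x - w2) - (w3 - w2) = x - w3 := by ring
      by_cases hcase : (x - w2).val < (w3 - w2).val
      · rw [if_pos hcase, ← he, zval_sub_of_lt hcase]
      · rw [if_neg hcase, ← he, zval_sub_of_le (Nat.le_of_not_lt hcase)]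
    have hp4 : (x - w4).val =
        (if (x - w2).val < (w3 - w2).val + (w4 - w3).val then
          (x - w2).val + n - ((w3 - w2).val + (w4 - w3).val)
          else (x - w2).val - ((w3 - w2).val + (w4 - w3).val)) := by
      have he : (x - w2) - (w4 - w2) = x - w4 := by ring
      by_cases hcase : (x - w2).val < (w3 - w2).val + (w4 - w3).val
      · rw [if_pos hcase, ← he, zval_sub_of_lt (by rw [hab]; exact hcase), hab]
      · rw [if_neg hcase, ← he, zval_sub_of_le (by rw [hab]; omega), hab]
    split_ifs at hp3 hp4 <;> omega
  have hU : Ta ∪ Tb ∪ Tc = Z1' := by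
    ext x
    constructor
    · intro hx
      rcases Finset.mem_union.1 hx with h | h
      · rcases Finset.mem_union.1 h with h' | h'
        · exact (Finset.mem_filter.1 h').1
        · exact (Finset.mem_filter.1 h').1
      · exact (Finset.mem_filter.1 h).1
    · intro hx
      rcases (hptw x hx).1 with h | h | h
      · exact Finset.mem_union_left _ (Finset.mem_union_left _ (Finset.mem_filter.2 ⟨hx, h⟩))
      · exact Finset.mem_union_left _ (Finset.mem_union_right _ (Finset.mem_filter.2 ⟨hx, h⟩))
      · exact Finset.mem_union_right _ (Finset.mem_filter.2 ⟨hx, h⟩)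
  have d1 : Disjoint Ta Tb := Finset.disjoint_left.2 (by
    intro x hxa hxb
    have ha' := Finset.mem_filter.1 hxa
    have hb' := Finset.mem_filter.1 hxb
    exact (hptw x ha'.1).2.1 ⟨ha'.2, hb'.2⟩)
  have d2 : Disjoint Ta Tc := Finset.disjoint_left.2 (by
    intro x hxa hxc
    have ha' := Finset.mem_filter.1 hxa
    have hc' := Finset.mem_filter.1 hxc
    exact (hptw x ha'.1).2.2.1 ⟨ha'.2, hc'.2⟩)
  have d3 : Disjoint Tb Tc := Finset.disjoint_left.2 (by
    intro x hxb hxc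
    have hb' := Finset.mem_filter.1 hxb
    have hc' := Finset.mem_filter.1 hxc
    exact (hptw x hb'.1).2.2.2 ⟨hb'.2, hc'.2⟩)
  have hcardsplit : Z1'.card = Ta.card + Tb.card + Tc.card := by
    rw [← hU, Finset.card_union_of_disjoint (Finset.disjoint_union_left.2 ⟨d2, d3⟩),
      Finset.card_union_of_disjoint d1]
  obtain ⟨z, hzZ, hz2, hz3, hz4⟩ := hz
  have hzZ' : z ∈ Z1' := Finset.mem_sdiff.2 ⟨hzZ, by simp [hz2, hz3, hz4]⟩
  have hzU : z ∈ Ta ∪ Tb ∪ Tc := hU.symm ▸ hzZ'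
  have hbig : 2 * Z1'.card + 4 * r ≤ n + 2 := by
    have hA1 := harcA.1
    have hB1 := harcB.1
    have hC1 := harcC.1
    rcases Finset.mem_union.1 hzU with h | h
    · rcases Finset.mem_union.1 h with h' | h'
      · have := harcA.2 ⟨z, h'⟩
        omega
      · have := harcB.2 ⟨z, h'⟩
        omega
    · have := harcC.2 ⟨z, h⟩
      omega
  have hsub : Z1 ⊆ Z1' ∪ {w2, w3, w4} := by
    intro x hx
    rw [Finset.mem_union]
    by_cases hm : x ∈ ({w2, w3, w4} : Finset (ZMod n))
    · exact Or.inr hm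
    · exact Or.inl (Finset.mem_sdiff.2 ⟨hx, hm⟩)
  have hcard3 : ({w2, w3, w4} : Finset (ZMod n)).card ≤ 3 := by
    have h1 := Finset.card_insert_le w2 ({w3, w4} : Finset (ZMod n))
    have h2 := Finset.card_insert_le w3 ({w4} : Finset (ZMod n))
    have h3 : ({w4} : Finset (ZMod n)).card = 1 := Finset.card_singleton _
    omega
  have hk : Z1.card ≤ Z1'.card + 3 :=
    le_trans (Finset.card_le_card hsub) (le_trans (Finset.card_union_le _ _) (by omega))
  omega

theorem stmt9 (n r : ℕ) (hn : 3 ≤ n) (hr : 2 ≤ r)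
    (Z1 Z2 Z3 Z4 : Finset (ZMod n))
    (h1 : ArcWithin n Z1) (h2 : ArcWithin n Z2) (h3 : ArcWithin n Z3) (h4 : ArcWithin n Z4)
    (h12 : ArcBetween n r Z1 Z2) (h21 : ArcBetween n r Z2 Z1)
    (h13 : ArcBetween n r Z1 Z3) (h31 : ArcBetween n r Z3 Z1)
    (h14 : ArcBetween n r Z1 Z4) (h41 : ArcBetween n r Z4 Z1)
    (h23 : ArcBetween n r Z2 Z3) (h32 : ArcBetween n r Z3 Z2)
    (h24 : ArcBetween n r Z2 Z4) (h42 : ArcBetween n r Z4 Z2)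
    (h34 : ArcBetween n r Z3 Z4) (h43 : ArcBetween n r Z4 Z3)
    (hnontriv : ∃ z1 ∈ Z1, ∃ z2 ∈ Z2, ∃ z3 ∈ Z3, ∃ z4 ∈ Z4,
      z1 ≠ z2 ∧ z1 ≠ z3 ∧ z1 ≠ z4 ∧ z2 ≠ z3 ∧ z2 ≠ z4 ∧ z3 ≠ z4)
    (hZ2 : Z2.card = 1) (hZ3 : Z3.card = 1) (hZ4 : Z4.card = 1)
    : 2 * (Z1.card : ℤ) + 4 * r - 8 ≤ (n : ℤ) := by
  haveI : NeZero n := ⟨by omega⟩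
  obtain ⟨z1, hz1, z2, hz2, z3, hz3, z4, hz4, h12', h13', h14', h23', h24', h34'⟩ := hnontriv
  have hB2 : ∀ x ∈ Z1, x ≠ z2 → r ≤ (x - z2).val ∧ r ≤ (z2 - x).val := fun x hx hne =>
    ⟨h21 z2 hz2 x hx (fun e => hne e.symm), h12 x hx z2 hz2 hne⟩
  have hB3 : ∀ x ∈ Z1, x ≠ z3 → r ≤ (x - z3).val ∧ r ≤ (z3 - x).val := fun x hx hne =>
    ⟨h31 z3 hz3 x hx (fun e => hne e.symm), h13 x hx z3 hz3 hne⟩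
  have hB4 : ∀ x ∈ Z1, x ≠ z4 → r ≤ (x - z4).val ∧ r ≤ (z4 - x).val := fun x hx hne =>
    ⟨h41 z4 hz4 x hx (fun e => hne e.symm), h14 x hx z4 hz4 hne⟩
  have da : r ≤ (z3 - z2).val := h23 z2 hz2 z3 hz3 h23'
  have da' : r ≤ (z2 - z3).val := h32 z3 hz3 z2 hz2 (Ne.symm h23')
  have db : r ≤ (z4 - z3).val := h34 z3 hz3 z4 hz4 h34'
  have db' : r ≤ (z3 - z4).val := h43 z4 hz4 z3 hz3 (Ne.symm h34')
  have dc : r ≤ (z2 - z4).val := h42 z4 hz4 z2 hz2 (Ne.symm h24')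
  have dc' : r ≤ (z4 - z2).val := h24 z2 hz2 z4 hz4 h24'
  have sa : (z3 - z2).val + (z2 - z3).val = n := zval_sub_add (Ne.symm h23')
  have sb : (z4 - z3).val + (z3 - z4).val = n := zval_sub_add (Ne.symm h34')
  have sc : (z2 - z4).val + (z4 - z2).val = n := zval_sub_add h24'
  have hlt1 : (z3 - z2).val < n := ZMod.val_lt _
  have hlt2 : (z4 - z3).val < n := ZMod.val_lt _
  have hd : (z4 - z2).val = ((z4 - z3).val + (z3 - z2).val) % n := by
    rw [show z4 - z2 = (z4 - z3) + (z3 - z2) by ring, ZMod.val_add]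
  by_cases hcase : (z3 - z2).val + (z4 - z3).val < n
  · have horder : (z3 - z2).val + (z4 - z3).val + (z2 - z4).val = n := by
      rw [Nat.mod_eq_of_lt (by omega)] at hd
      omega
    exact key_lemma n r hn hr Z1 h1 z2 z3 z4 hB2 hB3 hB4 da db dc horder
      ⟨z1, hz1, h12', h13', h14'⟩
  · have hd2 : (z4 - z2).val = (z4 - z3).val + (z3 - z2).val - n := by
      rw [hd, Nat.mod_eq_sub_mod (by omega), Nat.mod_eq_of_lt (by omega)]
    have horder : (z4 - z2).val + (z3 - z4).val + (z2 - z3).val = n := by omega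
    exact key_lemma n r hn hr Z1 h1 z2 z4 z3 hB2 hB4 hB3 dc' db' da' horder
      ⟨z1, hz1, h12', h14', h13'⟩
end

section
/- Let G be a 2-connected finite graph, A↑ a fragment of G, and let V↑ be the vertex set of a collection of vertex-disjoint paths Q↑_1,...,Q↑_m in ⟨A↑ ∪ S⟩ with terminal vertices in S, each of at least 2 vertices, maximizing the total number of vertices (condition (*1)). If A↑ − V↑ is a nonempty independent set, then |V↑| ≥ 2δ + m − 2. -/
open SimpleGraph

variable {V : Type*}

/-- The neighborhood `N(X)`: vertices outside `X` having a neighbor in `X`. -/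
def nbhd (G : SimpleGraph V) (X : Set V) : Set V :=
  {v | v ∉ X ∧ ∃ x ∈ X, G.Adj v x}

/-- `S` is a cut-set: removing `S` leaves a disconnected or trivial graph. -/
def IsCutSet (G : SimpleGraph V) (S : Set V) : Prop :=
  ¬ (G.induce Sᶜ).Connected ∨ Sᶜ.Subsingleton

/-- The connectivity `κ` of `G`. -/
noncomputable def kappa (G : SimpleGraph V) : ℕ :=
  sInf {k | ∃ S : Set V, S.ncard = k ∧ IsCutSet G S}

/-- `A` is a fragment of `G`: `N(A)` is a minimum cut-set and the complement
`Â = V - (A ∪ N(A))` is nonempty. -/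
def IsFragment (G : SimpleGraph V) (A : Set V) : Prop :=
  IsCutSet G (nbhd G A) ∧ (nbhd G A).ncard = kappa G ∧ (A ∪ nbhd G A)ᶜ.Nonempty

/-- An endfragment: a fragment containing no other fragment as a proper subset. -/
def IsEndfragment (G : SimpleGraph V) (A : Set V) : Prop :=
  IsFragment G A ∧ ∀ B ⊂ A, ¬ IsFragment G B

/-- A system of vertex-disjoint paths of at least two vertices each, lying in
`⟨A ∪ S⟩` with both terminal vertices in `S` (the setting of condition (*1)). -/
def IsUpSystem (G : SimpleGraph V) (A S : Set V) {m : ℕ}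
    (Q : Fin m → Σ u v : V, G.Walk u v) : Prop :=
  (∀ i, (Q i).2.2.IsPath) ∧
  (∀ i, (Q i).1 ∈ S ∧ (Q i).2.1 ∈ S) ∧
  (∀ i, 2 ≤ (Q i).2.2.support.length) ∧
  (∀ i, ∀ v ∈ (Q i).2.2.support, v ∈ A ∪ S) ∧
  (∀ i j, i ≠ j → (Q i).2.2.support.Disjoint (Q j).2.2.support)

/-- A system of vertex-disjoint paths lying in `⟨A ∪ S⟩` (the setting of the
paths `Q↓ᵢ` of Definition B). -/
def IsDownSystem (G : SimpleGraph V) (A S : Set V) {m : ℕ}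
    (Q : Fin m → Σ u v : V, G.Walk u v) : Prop :=
  (∀ i, (Q i).2.2.IsPath) ∧
  (∀ i, ∀ v ∈ (Q i).2.2.support, v ∈ A ∪ S) ∧
  (∀ i j, i ≠ j → (Q i).2.2.support.Disjoint (Q j).2.2.support)

/-- The total vertex set of a path system. -/
def systemVerts (G : SimpleGraph V) {m : ℕ}
    (Q : Fin m → Σ u v : V, G.Walk u v) : Set V :=
  ⋃ i, {v | v ∈ (Q i).2.2.support}

/-- The total number of vertices of a path system. -/
def systemSize (G : SimpleGraph V) {m : ℕ}
    (Q : Fin m → Σ u v : V, G.Walk u v) : ℕ :=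
  ∑ i, (Q i).2.2.support.length

/-- The paths `Qu i` and `Qd i` combine into the simple cycle `C`: the edges of
`C` are precisely the edges of all these paths. -/
def Combines (G : SimpleGraph V) {m : ℕ}
    (Qu Qd : Fin m → Σ u v : V, G.Walk u v) {x : V} (C : G.Walk x x) : Prop :=
  C.IsCycle ∧
    {e | e ∈ C.edges} =
      (⋃ i, {e | e ∈ (Qu i).2.2.edges}) ∪ ⋃ i, {e | e ∈ (Qd i).2.2.edges}

/-! Fix `a ∈ A↑ - V↑`. By independence every neighbour of `a` lies on a path `Q↑ᵢ` or in
`S - V↑`, and maximality of the system forbids four configurations: `a` adjacent to two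
consecutive vertices of a path (insert `a` between them), to two vertices of `S - V↑` (add the
path `s a t`), to a vertex of `S - V↑` and to an end of a path (extend the path through `a`),
or to ends of two different paths (join them through `a`). By the first, a path with `n`
vertices, `e` of whose ends are adjacent to `a`, carries at most `(n - 1 + e) / 2` neighbours
of `a`; summing over the paths and using the other three gives `2 deg a ≤ |V↑| - m + 2`. -/

namespace SimpleGraph.Walk

variable {G : SimpleGraph V}

theorem IsPath.exists_insert_of_mem_edges {a x y : V} :
    ∀ {u v : V} {p : G.Walk u v}, p.IsPath → a ∉ p.support → s(x, y) ∈ p.edges →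
      G.Adj a x → G.Adj a y →
      ∃ q : G.Walk u v, q.IsPath ∧ ∀ z, z ∈ q.support ↔ z = a ∨ z ∈ p.support
  | _, _, .nil, _, _, he, _, _ => by simp at he
  | u, _, .cons (v := b) hub p, hp, ha, he, hax, hay => by
    rw [cons_isPath_iff] at hp
    simp only [support_cons, List.mem_cons, not_or] at ha
    rw [edges_cons, List.mem_cons] at he
    rcases he with he | he
    · have hadj : G.Adj a u ∧ G.Adj a b := by
        rcases Sym2.eq_iff.mp he with ⟨rfl, rfl⟩ | ⟨rfl, rfl⟩
        exacts [⟨hax, hay⟩, ⟨hay, hax⟩]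
      refine ⟨cons hadj.1.symm (cons hadj.2 p), ?_, fun z => by simp; tauto⟩
      simp only [cons_isPath_iff, support_cons, List.mem_cons, not_or]
      exact ⟨⟨hp.1, ha.2⟩, Ne.symm ha.1, hp.2⟩
    · obtain ⟨q, hq, hmem⟩ := hp.1.exists_insert_of_mem_edges ha.2 he hax hay
      refine ⟨cons hub q, ?_, fun z => by simp [hmem]; tauto⟩
      rw [cons_isPath_iff, hmem]
      exact ⟨hq, by rintro (rfl | h); exacts [ha.1 rfl, hp.2 h]⟩

theorem two_le_length_support_of_mem_of_ne {u v a : V} {p : G.Walk u v}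
    (ha : a ∈ p.support) (hau : a ≠ u) : 2 ≤ p.support.length := by
  cases p with
  | nil => exact absurd (by simpa using ha) hau
  | cons _ q => simp

theorem IsPath.exists_reorient {S : Set V} {P : V → Prop} {u v : V} {p : G.Walk u v}
    (hp : p.IsPath) (hu : u ∈ S) (hv : v ∈ S) (h : P u ∨ P v) :
    ∃ (x y : V) (q : G.Walk x y),
      q.IsPath ∧ x ∈ S ∧ P y ∧ ∀ z, z ∈ q.support ↔ z ∈ p.support := by
  rcases h with h | h
  · exact ⟨v, u, p.reverse, hp.reverse, hv, h, by simp⟩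
  · exact ⟨u, v, p, hp, hu, h, fun _ => Iff.rfl⟩

theorem IsPath.append_cons_cons {u x a y v : V} {p : G.Walk u x} {q : G.Walk y v}
    (hp : p.IsPath) (hq : q.IsPath) (hxa : G.Adj x a) (hay : G.Adj a y)
    (hap : a ∉ p.support) (haq : a ∉ q.support) (hpq : p.support.Disjoint q.support) :
    (p.append (cons hxa (cons hay q))).IsPath := by
  rw [isPath_def, support_append, support_cons, List.tail_cons, support_cons, List.nodup_append]
  refine ⟨hp.support_nodup, List.nodup_cons.mpr ⟨haq, hq.support_nodup⟩, ?_⟩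
  rintro z hzp _ hz rfl
  rcases List.mem_cons.mp hz with rfl | hzq
  exacts [hap hzp, hpq hzp hzq]

theorem mem_support_append_cons_cons {u x a y v z : V} {p : G.Walk u x} {q : G.Walk y v}
    (hxa : G.Adj x a) (hay : G.Adj a y) :
    z ∈ (p.append (cons hxa (cons hay q))).support ↔
      z ∈ p.support ∨ z = a ∨ z ∈ q.support := by
  rw [support_append, support_cons, List.tail_cons, List.mem_append, support_cons, List.mem_cons]

theorem two_mul_countP_support_add_one_le {P : V → Prop} [DecidablePred P] :
    ∀ {u v : V} (p : G.Walk u v), (∀ x y, s(x, y) ∈ p.edges → ¬ (P x ∧ P y)) →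
      2 * p.support.countP (P ·) + 1 ≤
        p.support.length + (if P u then 1 else 0) + (if P v then 1 else 0)
  | _, _, .nil, _ => by simp only [support_nil]; split_ifs <;> simp [*]
  | u, _, .cons (v := b) hub p, hP => by
    have ih := p.two_mul_countP_support_add_one_le fun x y he => hP x y (by simp [he])
    have hub : ¬ (P u ∧ P b) := hP u b (by simp)
    rw [support_cons, List.countP_cons, List.length_cons]
    split_ifs at ih ⊢ <;> simp_all <;> omega

end SimpleGraph.Walk

section PathSystems

variable {G : SimpleGraph V} {A S : Set V}

def IsUpPath (G : SimpleGraph V) (A S : Set V) (p : Σ u v : V, G.Walk u v) : Prop :=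
  p.2.2.IsPath ∧ (p.1 ∈ S ∧ p.2.1 ∈ S) ∧ 2 ≤ p.2.2.support.length ∧
    ∀ v ∈ p.2.2.support, v ∈ A ∪ S

theorem isUpSystem_iff {m : ℕ} {Q : Fin m → Σ u v : V, G.Walk u v} :
    IsUpSystem G A S Q ↔
      (∀ i, IsUpPath G A S (Q i)) ∧
        Pairwise fun i j => (Q i).2.2.support.Disjoint (Q j).2.2.support := by
  simp only [IsUpSystem, IsUpPath, forall_and, Pairwise]
  tauto

theorem notMem_support_of_notMem_systemVerts {m : ℕ} {Q : Fin m → Σ u v : V, G.Walk u v}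
    {x : V} (hx : x ∉ systemVerts G Q) (i : Fin m) : x ∉ (Q i).2.2.support :=
  fun h => hx (Set.mem_iUnion.mpr ⟨i, h⟩)

theorem systemVerts_finite {m : ℕ} (Q : Fin m → Σ u v : V, G.Walk u v) :
    (systemVerts G Q).Finite :=
  Set.finite_iUnion fun _ => List.finite_toSet _

theorem IsUpSystem.ncard_systemVerts {m : ℕ} {Q : Fin m → Σ u v : V, G.Walk u v}
    (hQ : IsUpSystem G A S Q) : (systemVerts G Q).ncard = systemSize G Q := by
  classical
  have hverts : systemVerts G Q =
      ↑(Finset.univ.biUnion fun i => (Q i).2.2.support.toFinset) := by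
    ext v
    simp [systemVerts]
  rw [hverts, Set.ncard_coe_finset, Finset.card_biUnion]
  · exact Finset.sum_congr rfl fun i _ => List.toFinset_card_of_nodup (hQ.1 i).support_nodup
  · intro i _ j _ hij
    simpa [Function.onFun, Finset.disjoint_left] using
      fun z hzi hzj => hQ.2.2.2.2 i j hij hzi hzj

theorem mem_systemVerts_cons {m k : ℕ} {p : Σ u v : V, G.Walk u v}
    {Q : Fin m → Σ u v : V, G.Walk u v} {f : Fin k → Fin m} {x : V} :
    x ∈ systemVerts G (Fin.cons p (Q ∘ f) : Fin (k + 1) → _) ↔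
      x ∈ p.2.2.support ∨ ∃ i, x ∈ (Q (f i)).2.2.support := by
  simp only [systemVerts, Set.mem_iUnion, Fin.exists_fin_succ]
  rfl

/-- The common form of all exchange arguments: the paths `Q k`, `k ∈ I`, are replaced by one
path `p` which otherwise uses only new vertices. -/
theorem IsUpSystem.exists_systemSize_lt_of_absorb {m : ℕ} {Q : Fin m → Σ u v : V, G.Walk u v}
    (hQ : IsUpSystem G A S Q) (I : Finset (Fin m)) {u v a : V} (p : G.Walk u v)
    (hp : p.IsPath) (hu : u ∈ S) (hv : v ∈ S)
    (hsupp : ∀ x ∈ p.support,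
      (x ∈ A ∪ S ∧ x ∉ systemVerts G Q) ∨ ∃ k ∈ I, x ∈ (Q k).2.2.support)
    (habs : ∀ k ∈ I, ∀ x ∈ (Q k).2.2.support, x ∈ p.support)
    (ha : a ∈ p.support) (haS : a ∉ S) (haV : a ∉ systemVerts G Q) :
    ∃ (m' : ℕ) (Q' : Fin m' → Σ u v : V, G.Walk u v),
      IsUpSystem G A S Q' ∧ systemSize G Q < systemSize G Q' := by
  classical
  obtain ⟨k, f, hfinj, hf⟩ : ∃ (k : ℕ) (f : Fin k → Fin m),
      Function.Injective f ∧ ∀ j, j ∈ Set.range f ↔ j ∉ I :=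
    ⟨_, Iᶜ.orderEmbOfFin rfl, (Iᶜ.orderEmbOfFin rfl).injective,
      fun j => by simp [Finset.range_orderEmbOfFin]⟩
  obtain ⟨hpaths, hdisj⟩ := isUpSystem_iff.mp hQ
  have hpQ : ∀ i, p.support.Disjoint (Q (f i)).2.2.support := by
    intro i x hxp hxk
    rcases hsupp x hxp with ⟨-, hxV⟩ | ⟨l, hl, hxl⟩
    · exact notMem_support_of_notMem_systemVerts hxV _ hxk
    · exact hdisj (fun h : l = f i => (hf _).mp ⟨i, rfl⟩ (h ▸ hl)) hxl hxk
  have hpUp : IsUpPath G A S ⟨u, v, p⟩ := by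
    refine ⟨hp, ⟨hu, hv⟩,
      p.two_le_length_support_of_mem_of_ne ha fun h => haS (h ▸ hu), fun x hx => ?_⟩
    rcases hsupp x hx with ⟨hx, -⟩ | ⟨k, -, hxk⟩
    exacts [hx, (hpaths k).2.2.2 x hxk]
  have hQ' : IsUpSystem G A S (Fin.cons ⟨u, v, p⟩ (Q ∘ f) : Fin (k + 1) → _) := by
    refine isUpSystem_iff.mpr ⟨Fin.cases hpUp fun i => hpaths (f i), fun i j hij => ?_⟩
    induction i using Fin.cases <;> induction j using Fin.cases
    · exact absurd rfl hij
    · exact hpQ _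
    · exact (hpQ _).symm
    · exact hdisj (hfinj.ne (Fin.succ_injective _ |>.ne_iff.mp hij))
  refine ⟨_, _, hQ', ?_⟩
  rw [← hQ.ncard_systemVerts, ← hQ'.ncard_systemVerts]
  refine Set.ncard_lt_ncard ⟨fun x hx => ?_, fun hsub => haV (hsub ?_)⟩ (systemVerts_finite _)
  · obtain ⟨j, hxj⟩ := Set.mem_iUnion.mp hx
    rw [mem_systemVerts_cons]
    by_cases hj : j ∈ I
    · exact Or.inl (habs j hj x hxj)
    · obtain ⟨i, rfl⟩ := (hf j).mpr hj
      exact Or.inr ⟨i, hxj⟩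
  · exact mem_systemVerts_cons.mpr (Or.inl ha)

end PathSystems

/-- Condition (*1). -/
def IsMaxUpSystem (G : SimpleGraph V) (A S : Set V) {m : ℕ}
    (Q : Fin m → Σ u v : V, G.Walk u v) : Prop :=
  IsUpSystem G A S Q ∧ ∀ (m' : ℕ) (Q' : Fin m' → Σ u v : V, G.Walk u v),
    IsUpSystem G A S Q' → systemSize G Q' ≤ systemSize G Q

namespace IsMaxUpSystem

variable {G : SimpleGraph V} {A S : Set V} {m : ℕ} {Q : Fin m → Σ u v : V, G.Walk u v}

theorem false_of_absorb (hQ : IsMaxUpSystem G A S Q) (I : Finset (Fin m)) {u v a : V}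
    (p : G.Walk u v) (hp : p.IsPath) (hu : u ∈ S) (hv : v ∈ S)
    (hsupp : ∀ x ∈ p.support,
      (x ∈ A ∪ S ∧ x ∉ systemVerts G Q) ∨ ∃ k ∈ I, x ∈ (Q k).2.2.support)
    (habs : ∀ k ∈ I, ∀ x ∈ (Q k).2.2.support, x ∈ p.support)
    (ha : a ∈ p.support) (haS : a ∉ S) (haV : a ∉ systemVerts G Q) : False :=
  have ⟨m', Q', hQ', hlt⟩ :=
    hQ.1.exists_systemSize_lt_of_absorb I p hp hu hv hsupp habs ha haS haV
  hlt.not_ge (hQ.2 m' Q' hQ')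

theorem not_adj_of_mem_edges (hQ : IsMaxUpSystem G A S Q) {a : V} (haA : a ∈ A)
    (haS : a ∉ S) (haV : a ∉ systemVerts G Q) {i : Fin m} {x y : V}
    (he : s(x, y) ∈ (Q i).2.2.edges) (hx : G.Adj a x) : ¬ G.Adj a y := by
  intro hy
  obtain ⟨q, hq, hmem⟩ := (hQ.1.1 i).exists_insert_of_mem_edges
    (notMem_support_of_notMem_systemVerts haV i) he hx hy
  refine hQ.false_of_absorb {i} q hq (hQ.1.2.1 i).1 (hQ.1.2.1 i).2 (fun z hz => ?_)
    (fun k hk z hz => (hmem z).2 (Or.inr (Finset.mem_singleton.mp hk ▸ hz)))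
    ((hmem a).2 (Or.inl rfl)) haS haV
  rcases (hmem z).1 hz with rfl | hz
  exacts [Or.inl ⟨Or.inl haA, haV⟩, Or.inr ⟨i, Finset.mem_singleton_self i, hz⟩]

theorem eq_of_adj_of_notMem (hQ : IsMaxUpSystem G A S Q) {a : V} (haA : a ∈ A)
    (haS : a ∉ S) (haV : a ∉ systemVerts G Q) {s t : V} (hs : s ∈ S) (ht : t ∈ S)
    (hsV : s ∉ systemVerts G Q) (htV : t ∉ systemVerts G Q) (has : G.Adj a s)
    (hat : G.Adj a t) : s = t := by
  by_contra hst
  have hp := (Walk.IsPath.nil (u := s)).append_cons_cons Walk.IsPath.nil has.symm hat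
    (by simpa using has.ne) (by simpa using hat.ne) (by simpa using Ne.symm hst)
  refine hQ.false_of_absorb ∅ _ hp hs ht (fun x hx => Or.inl ?_) (by simp) (by simp) haS haV
  simp only [Walk.mem_support_append_cons_cons, Walk.support_nil, List.mem_singleton] at hx
  rcases hx with rfl | rfl | rfl
  exacts [⟨Or.inr hs, hsV⟩, ⟨Or.inl haA, haV⟩, ⟨Or.inr ht, htV⟩]

theorem not_adj_end_of_adj_of_notMem (hQ : IsMaxUpSystem G A S Q) {a : V} (haA : a ∈ A)
    (haS : a ∉ S) (haV : a ∉ systemVerts G Q) {s : V} (hs : s ∈ S)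
    (hsV : s ∉ systemVerts G Q) (has : G.Adj a s) (i : Fin m) :
    ¬ (G.Adj a (Q i).1 ∨ G.Adj a (Q i).2.1) := by
  intro hi
  obtain ⟨x, y, q, hq, hxS, hya, hmem⟩ :=
    (hQ.1.1 i).exists_reorient (P := G.Adj a) (hQ.1.2.1 i).1 (hQ.1.2.1 i).2 hi
  have haQ := notMem_support_of_notMem_systemVerts haV i
  have hsQ := notMem_support_of_notMem_systemVerts hsV i
  have hp := (Walk.IsPath.nil (u := s)).append_cons_cons hq.reverse has.symm hya
    (by simpa using has.ne) (by simpa [hmem] using haQ) (by simpa [hmem] using hsQ)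
  refine hQ.false_of_absorb {i} _ hp hs hxS (fun z hz => ?_) (fun k hk z hz => ?_)
    (by simp) haS haV
  · simp only [Walk.mem_support_append_cons_cons, Walk.support_nil, List.mem_singleton,
      Walk.support_reverse, List.mem_reverse, hmem] at hz
    rcases hz with rfl | rfl | hz
    · exact Or.inl ⟨Or.inr hs, hsV⟩
    · exact Or.inl ⟨Or.inl haA, haV⟩
    · exact Or.inr ⟨i, Finset.mem_singleton_self i, hz⟩
  · rw [Finset.mem_singleton.mp hk] at hz
    simp [hmem, hz]

theorem eq_of_adj_ends (hQ : IsMaxUpSystem G A S Q) {a : V} (haA : a ∈ A)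
    (haS : a ∉ S) (haV : a ∉ systemVerts G Q) {i j : Fin m}
    (hi : G.Adj a (Q i).1 ∨ G.Adj a (Q i).2.1) (hj : G.Adj a (Q j).1 ∨ G.Adj a (Q j).2.1) :
    i = j := by
  by_contra hij
  obtain ⟨x, y, q, hq, hxS, hya, hmem⟩ :=
    (hQ.1.1 i).exists_reorient (P := G.Adj a) (hQ.1.2.1 i).1 (hQ.1.2.1 i).2 hi
  obtain ⟨x', y', q', hq', hxS', hya', hmem'⟩ :=
    (hQ.1.1 j).exists_reorient (P := G.Adj a) (hQ.1.2.1 j).1 (hQ.1.2.1 j).2 hj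
  have hp := hq.append_cons_cons hq'.reverse hya.symm hya'
    (by simpa [hmem] using notMem_support_of_notMem_systemVerts haV i)
    (by simpa [hmem'] using notMem_support_of_notMem_systemVerts haV j)
    (fun z hz hz' => hQ.1.2.2.2.2 i j hij ((hmem z).1 hz) ((hmem' z).1 (by simpa using hz')))
  refine hQ.false_of_absorb {i, j} _ hp hxS hxS' (fun z hz => ?_) (fun k hk z hz => ?_)
    (by simp) haS haV
  · simp only [Walk.mem_support_append_cons_cons, Walk.support_reverse, List.mem_reverse, hmem,
      hmem'] at hz
    rcases hz with hz | rfl | hz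
    · exact Or.inr ⟨i, by simp, hz⟩
    · exact Or.inl ⟨Or.inl haA, haV⟩
    · exact Or.inr ⟨j, by simp, hz⟩
  · rcases Finset.mem_insert.mp hk with rfl | hk
    · simp [hmem, hz]
    · rw [Finset.mem_singleton.mp hk] at hz
      simp [hmem', hz]

end IsMaxUpSystem

open Classical in
theorem SimpleGraph.degree_le_card_filter_add_sum_countP [Fintype V] (G : SimpleGraph V)
    [DecidableRel G.Adj] {m : ℕ} (Q : Fin m → Σ u v : V, G.Walk u v) (a : V) :
    G.degree a ≤ ((G.neighborFinset a).filter (· ∉ systemVerts G Q)).card +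
      ∑ i, (Q i).2.2.support.countP (G.Adj a ·) := by
  set T := (G.neighborFinset a).filter (· ∉ systemVerts G Q)
  set N := fun i => ((Q i).2.2.support.filter (G.Adj a ·)).toFinset
  have hsub : G.neighborFinset a ⊆ T ∪ Finset.univ.biUnion N := by
    intro b hb
    by_cases hbV : b ∈ systemVerts G Q
    · obtain ⟨i, hbi⟩ := Set.mem_iUnion.mp hbV
      refine Finset.mem_union_right _ (Finset.mem_biUnion.mpr ⟨i, Finset.mem_univ i, ?_⟩)
      exact List.mem_toFinset.mpr (List.mem_filter.mpr ⟨hbi, by simpa using hb⟩)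
    · exact Finset.mem_union_left _ (Finset.mem_filter.mpr ⟨hb, hbV⟩)
  calc G.degree a = (G.neighborFinset a).card := (G.card_neighborFinset_eq_degree a).symm
    _ ≤ (T ∪ Finset.univ.biUnion N).card := Finset.card_le_card hsub
    _ ≤ T.card + ∑ i, (N i).card :=
      (Finset.card_union_le _ _).trans (Nat.add_le_add_left Finset.card_biUnion_le _)
    _ ≤ T.card + ∑ i, (Q i).2.2.support.countP (G.Adj a ·) := by
      gcongr with i
      rw [List.countP_eq_length_filter]
      exact List.toFinset_card_le _

namespace IsMaxUpSystem

variable {G : SimpleGraph V} {A S : Set V} {m : ℕ} {Q : Fin m → Σ u v : V, G.Walk u v}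

open Classical in
/-- Neighbours of `a` outside `V↑` and ends of the paths adjacent to `a` exclude each other,
and there are at most two of the latter, on a single path. -/
theorem two_mul_card_add_sum_le_two [Fintype V] [DecidableRel G.Adj]
    (hQ : IsMaxUpSystem G A S Q) {a : V} (haA : a ∈ A) (haS : a ∉ S)
    (haV : a ∉ systemVerts G Q) (hN : ∀ b, G.Adj a b → b ∉ systemVerts G Q → b ∈ S) :
    2 * ((G.neighborFinset a).filter (· ∉ systemVerts G Q)).card +
      ∑ i, ((if G.Adj a (Q i).1 then 1 else 0) + (if G.Adj a (Q i).2.1 then 1 else 0)) ≤ 2 := by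
  by_cases h : ∃ i, G.Adj a (Q i).1 ∨ G.Adj a (Q i).2.1
  · obtain ⟨i, hi⟩ := h
    have hT : (G.neighborFinset a).filter (· ∉ systemVerts G Q) = ∅ := by
      refine Finset.filter_eq_empty_iff.mpr fun b hb hbV => ?_
      have hab := (G.mem_neighborFinset a b).mp hb
      exact hQ.not_adj_end_of_adj_of_notMem haA haS haV (hN b hab hbV) hbV hab i hi
    have hothers : ∀ j ≠ i, ¬ G.Adj a (Q j).1 ∧ ¬ G.Adj a (Q j).2.1 := fun j hji =>
      not_or.mp fun hj => hji (hQ.eq_of_adj_ends haA haS haV hj hi)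
    rw [hT, Finset.sum_eq_single i (fun j _ hji => by simp [hothers j hji]) (by simp)]
    split_ifs <;> simp
  · push Not at h
    rw [Finset.sum_eq_zero fun i _ => by simp [h i]]
    have hT : ((G.neighborFinset a).filter (· ∉ systemVerts G Q)).card ≤ 1 := by
      refine Finset.card_le_one.mpr fun s hs t ht => ?_
      obtain ⟨has, hsV⟩ := Finset.mem_filter.mp hs
      obtain ⟨hat, htV⟩ := Finset.mem_filter.mp ht
      rw [mem_neighborFinset] at has hat
      exact hQ.eq_of_adj_of_notMem haA haS haV (hN s has hsV) (hN t hat htV) hsV htV has hat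
    omega

end IsMaxUpSystem

theorem stmt16_general [Fintype V] (G : SimpleGraph V) [DecidableRel G.Adj]
    (A : Set V)
    (m : ℕ) (Q : Fin m → Σ u v : V, G.Walk u v)
    (hQ : IsUpSystem G A (nbhd G A) Q)
    (hmax : ∀ (m' : ℕ) (Q' : Fin m' → Σ u v : V, G.Walk u v),
      IsUpSystem G A (nbhd G A) Q' → systemSize G Q' ≤ systemSize G Q)
    (hne : (A \ systemVerts G Q).Nonempty)
    (hind : ∀ a ∈ A \ systemVerts G Q, ∀ b ∈ A \ systemVerts G Q, ¬ G.Adj a b) :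
    2 * (G.minDegree : ℤ) + m - 2 ≤ ((systemVerts G Q).ncard : ℤ) := by
  classical
  obtain ⟨a, haA, haV⟩ := hne
  have hQmax : IsMaxUpSystem G A (nbhd G A) Q := ⟨hQ, hmax⟩
  have haS : a ∉ nbhd G A := fun h => h.1 haA
  have hN : ∀ b, G.Adj a b → b ∉ systemVerts G Q → b ∈ nbhd G A := fun b hab hbV =>
    ⟨fun hbA => hind a ⟨haA, haV⟩ b ⟨hbA, hbV⟩ hab, a, haA, hab.symm⟩
  have hpaths := Finset.sum_le_sum fun i (_ : i ∈ Finset.univ) =>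
    (Q i).2.2.two_mul_countP_support_add_one_le fun x y he ⟨hx, hy⟩ =>
      hQmax.not_adj_of_mem_edges haA haS haV he hx hy
  have hdeg := (G.minDegree_le_degree a).trans (G.degree_le_card_filter_add_sum_countP Q a)
  have hends := hQmax.two_mul_card_add_sum_le_two haA haS haV hN
  simp only [Finset.sum_add_distrib, ← Finset.mul_sum, Finset.sum_const, Finset.card_univ,
    Fintype.card_fin, smul_eq_mul, mul_one] at hpaths hends
  rw [hQ.ncard_systemVerts, systemSize]
  omega

/-- if, in a 2-connected graph, the maximal path system `Q↑` of a
fragment `A↑` (condition (*1)) leaves a nonempty independent set `A↑ - V↑`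
uncovered, then `|V↑| ≥ 2δ + m - 2`. -/
theorem stmt16 [Fintype V] (G : SimpleGraph V) [DecidableRel G.Adj]
    (h2 : 2 ≤ kappa G)
    (A : Set V) (hA : IsFragment G A)
    (m : ℕ) (Q : Fin m → Σ u v : V, G.Walk u v)
    (hQ : IsUpSystem G A (nbhd G A) Q)
    (hmax : ∀ (m' : ℕ) (Q' : Fin m' → Σ u v : V, G.Walk u v),
      IsUpSystem G A (nbhd G A) Q' → systemSize G Q' ≤ systemSize G Q)
    (hne : (A \ systemVerts G Q).Nonempty)
    (hind : ∀ a ∈ A \ systemVerts G Q, ∀ b ∈ A \ systemVerts G Q, ¬ G.Adj a b) :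
    2 * (G.minDegree : ℤ) + m - 2 ≤ ((systemVerts G Q).ncard : ℤ) :=
  stmt16_general G A m Q hQ hmax hne hind
end
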